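/- arXiv:2510.18506 — 7 statements merged into one kernel-verified Lean document; each statement's English description precedes it below -/
import Mathlib

section
/- Let d ≥ 2 be an integer. The triangle in ℝ² with vertices (0,0), (1,d−1) and (d,0) (i.e. the convex hull of these three points) is integrally indecomposable: whenever it is written as a Minkowski sum A + B where A is the convex hull of a finite nonempty set of points of ℤ² and B is the convex hull of a finite nonempty set of points of ℤ², then A or B consists of a single point. -/
open scoped Pointwise

noncomputable def Lf (c p : ℝ × ℝ) : ℝ := c.1 * p.1 + c.2 * p.2

lemma Lf_linear (c : ℝ × ℝ) : IsLinearMap ℝ (Lf c) := by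
  constructor
  · intro p q; simp [Lf, Prod.fst_add, Prod.snd_add]; ring
  · intro t p; simp [Lf, Prod.smul_fst, Prod.smul_snd, smul_eq_mul]; ring

lemma Lf_add (c p q : ℝ × ℝ) : Lf c (p + q) = Lf c p + Lf c q := (Lf_linear c).map_add p q

lemma hull_bound {S : Set (ℝ × ℝ)} {c : ℝ × ℝ} {M : ℝ} (h : ∀ p ∈ S, Lf c p ≤ M) :
    ∀ x ∈ convexHull ℝ S, Lf c x ≤ M := by
  intro x hx
  exact convexHull_min h (convex_halfSpace_le (Lf_linear c) M) hx

lemma exists_support {S : Set (ℝ × ℝ)} (c : ℝ × ℝ) (hfin : S.Finite) (hne : S.Nonempty) :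
    ∃ a ∈ S, ∀ x ∈ convexHull ℝ S, Lf c x ≤ Lf c a := by
  obtain ⟨a, haS, hmax⟩ := Finset.exists_max_image hfin.toFinset (Lf c)
    (by simpa using hne)
  refine ⟨a, by simpa using haS, hull_bound ?_⟩
  intro p hp; exact hmax p (hfin.mem_toFinset.mpr hp)

lemma mem_triangle {p q r x : ℝ × ℝ} (hx : x ∈ convexHull ℝ ({p, q, r} : Set (ℝ × ℝ))) :
    ∃ c0 c1 c2 : ℝ, 0 ≤ c0 ∧ 0 ≤ c1 ∧ 0 ≤ c2 ∧ c0 + c1 + c2 = 1 ∧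
      x = c0 • p + c1 • q + c2 • r := by
  rw [show ({p, q, r} : Set (ℝ × ℝ)) = insert p {q, r} from rfl,
    convexHull_insert ⟨q, by simp⟩, convexHull_pair] at hx
  rw [mem_convexJoin] at hx
  obtain ⟨p', hp', y, hy, hxy⟩ := hx
  rw [Set.mem_singleton_iff] at hp'; subst hp'
  obtain ⟨u, w, hu, hw, huw, rfl⟩ := hy
  obtain ⟨s, t, hs, ht, hst, rfl⟩ := hxy
  exact ⟨s, t * u, t * w, hs, by positivity, by positivity, by nlinarith,
    by simp [smul_add, smul_smul]; abel⟩

lemma eq_vertex {p q r x c : ℝ × ℝ} (hx : x ∈ convexHull ℝ ({p, q, r} : Set (ℝ × ℝ)))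
    (hq : Lf c q < Lf c p) (hr : Lf c r < Lf c p) (hxp : Lf c p ≤ Lf c x) : x = p := by
  obtain ⟨c0, c1, c2, h0, h1, h2, hsum, rfl⟩ := mem_triangle hx
  have hL : Lf c (c0 • p + c1 • q + c2 • r) = c0 * Lf c p + c1 * Lf c q + c2 * Lf c r := by
    simp [Lf, Prod.fst_add, Prod.snd_add, Prod.smul_fst, Prod.smul_snd, smul_eq_mul]; ring
  rw [hL] at hxp
  have hexp : c0 * Lf c p + c1 * Lf c p + c2 * Lf c p = Lf c p := by
    linear_combination (Lf c p) * hsum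
  have k1 : 0 ≤ c1 * Lf c p - c1 * Lf c q := by
    have := mul_nonneg h1 (sub_nonneg.mpr hq.le); rwa [mul_sub] at this
  have k2 : 0 ≤ c2 * Lf c p - c2 * Lf c r := by
    have := mul_nonneg h2 (sub_nonneg.mpr hr.le); rwa [mul_sub] at this
  have z1 : c1 * (Lf c p - Lf c q) = 0 := by rw [mul_sub]; linarith
  have z2 : c2 * (Lf c p - Lf c r) = 0 := by rw [mul_sub]; linarith
  have hc1 : c1 = 0 := by
    rcases mul_eq_zero.mp z1 with h | h
    · exact h
    · exact absurd (sub_eq_zero.mp h) (ne_of_gt hq)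
  have hc2 : c2 = 0 := by
    rcases mul_eq_zero.mp z2 with h | h
    · exact h
    · exact absurd (sub_eq_zero.mp h) (ne_of_gt hr)
  have hc0 : c0 = 1 := by linarith
  simp [hc0, hc1, hc2]

lemma edge_eq {A B : Set (ℝ × ℝ)} {w a a' b b' v v' cA cB : ℝ × ℝ}
    (hTmax : ∀ x ∈ A + B, Lf w x ≤ Lf w v)
    (hvv' : Lf w v' = Lf w v)
    (hab : a + b = v) (ha'b' : a' + b' = v')
    (hcA : cA ∈ A) (hcB : cB ∈ B)
    (hmaxA : ∀ x ∈ A, Lf w x ≤ Lf w cA) (hmaxB : ∀ x ∈ B, Lf w x ≤ Lf w cB)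
    (haA : a ∈ A) (ha'A : a' ∈ A) (hbB : b ∈ B) (hb'B : b' ∈ B) :
    Lf w a = Lf w a' ∧ Lf w b = Lf w b' := by
  have h1 : Lf w cA + Lf w cB ≤ Lf w v := by
    have := hTmax (cA + cB) (Set.add_mem_add hcA hcB)
    rwa [Lf_add] at this
  have h2 : Lf w a + Lf w b = Lf w v := by rw [← hab, Lf_add]
  have h3 : Lf w a' + Lf w b' = Lf w v := by rw [← hvv', ← ha'b', Lf_add]
  have e1 : Lf w a = Lf w cA := le_antisymm (hmaxA a haA) (by linarith [hmaxB b hbB])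
  have e2 : Lf w a' = Lf w cA := le_antisymm (hmaxA a' ha'A) (by linarith [hmaxB b' hb'B])
  have e3 : Lf w b = Lf w cB := le_antisymm (hmaxB b hbB) (by linarith [hmaxA a haA])
  have e4 : Lf w b' = Lf w cB := le_antisymm (hmaxB b' hb'B) (by linarith [hmaxA a' ha'A])
  exact ⟨e1.trans e2.symm, e3.trans e4.symm⟩

lemma singleton_of {A : Set (ℝ × ℝ)} {a : ℝ × ℝ} {e : ℝ} (he : 0 < e)
    (haA : a ∈ A)
    (h1 : ∀ x ∈ A, e * a.1 + a.2 ≤ e * x.1 + x.2)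
    (h2 : ∀ x ∈ A, x.2 ≤ a.2)
    (h3 : ∀ x ∈ A, x.1 ≤ a.1) : A = {a} := by
  refine Set.eq_singleton_iff_unique_mem.mpr ⟨haA, fun x hx => ?_⟩
  have i1 := h1 x hx; have i2 := h2 x hx; have i3 := h3 x hx
  have e1 : x.1 = a.1 := by nlinarith
  have e2 : x.2 = a.2 := by nlinarith
  exact Prod.ext e1 e2
/-- The triangle with vertices `(0,0)`, `(1,d-1)`, `(d,0)` (for `d ≥ 2`) is
integrally indecomposable: whenever it is a Minkowski sum `A + B` of two integral polytopes
(convex hulls of finite nonempty sets of integer points), one of `A`, `B` is a single point. -/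
theorem triangle_integrally_indecomposable (d : ℕ) (hd : 2 ≤ d)
    (A B SA SB : Set (ℝ × ℝ))
    (hSAfin : SA.Finite) (hSAne : SA.Nonempty)
    (hSAint : ∀ p ∈ SA, ∃ m n : ℤ, p = ((m : ℝ), (n : ℝ)))
    (hSBfin : SB.Finite) (hSBne : SB.Nonempty)
    (hSBint : ∀ p ∈ SB, ∃ m n : ℤ, p = ((m : ℝ), (n : ℝ)))
    (hA : A = convexHull ℝ SA) (hB : B = convexHull ℝ SB)
    (hsum : convexHull ℝ {((0 : ℝ), (0 : ℝ)), ((1 : ℝ), (d : ℝ) - 1), ((d : ℝ), (0 : ℝ))}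
      = A + B) :
    (∃ p, A = {p}) ∨ (∃ p, B = {p}) := by
  have hd' : (2 : ℝ) ≤ (d : ℝ) := by exact_mod_cast hd
  set v0 : ℝ × ℝ := ((0 : ℝ), (0 : ℝ)) with hv0def
  set v1 : ℝ × ℝ := ((1 : ℝ), (d : ℝ) - 1) with hv1def
  set v2 : ℝ × ℝ := ((d : ℝ), (0 : ℝ)) with hv2def
  set u1 : ℝ × ℝ := (-(((d : ℝ)) - 1), (-1 : ℝ)) with hu1def
  set u2 : ℝ × ℝ := ((0 : ℝ), (1 : ℝ)) with hu2def
  set u3 : ℝ × ℝ := ((1 : ℝ), (0 : ℝ)) with hu3def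
  set w1 : ℝ × ℝ := (-(((d : ℝ)) - 1), (1 : ℝ)) with hw1def
  set w2 : ℝ × ℝ := ((1 : ℝ), (1 : ℝ)) with hw2def
  set w3 : ℝ × ℝ := ((0 : ℝ), (-1 : ℝ)) with hw3def
  -- support points
  obtain ⟨a0, ha0S, ha0max⟩ := exists_support u1 hSAfin hSAne
  obtain ⟨a1, ha1S, ha1max⟩ := exists_support u2 hSAfin hSAne
  obtain ⟨a2, ha2S, ha2max⟩ := exists_support u3 hSAfin hSAne
  obtain ⟨b0, hb0S, hb0max⟩ := exists_support u1 hSBfin hSBne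
  obtain ⟨b1, hb1S, hb1max⟩ := exists_support u2 hSBfin hSBne
  obtain ⟨b2, hb2S, hb2max⟩ := exists_support u3 hSBfin hSBne
  obtain ⟨cA1, hcA1S, hcA1max⟩ := exists_support w1 hSAfin hSAne
  obtain ⟨cA2, hcA2S, hcA2max⟩ := exists_support w2 hSAfin hSAne
  obtain ⟨cA3, hcA3S, hcA3max⟩ := exists_support w3 hSAfin hSAne
  obtain ⟨cB1, hcB1S, hcB1max⟩ := exists_support w1 hSBfin hSBne
  obtain ⟨cB2, hcB2S, hcB2max⟩ := exists_support w2 hSBfin hSBne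
  obtain ⟨cB3, hcB3S, hcB3max⟩ := exists_support w3 hSBfin hSBne
  rw [← hA] at ha0max ha1max ha2max hcA1max hcA2max hcA3max
  rw [← hB] at hb0max hb1max hb2max hcB1max hcB2max hcB3max
  have hSAsub : SA ⊆ A := hA ▸ subset_convexHull ℝ SA
  have hSBsub : SB ⊆ B := hB ▸ subset_convexHull ℝ SB
  have ha0A := hSAsub ha0S; have ha1A := hSAsub ha1S; have ha2A := hSAsub ha2S
  have hb0B := hSBsub hb0S; have hb1B := hSBsub hb1S; have hb2B := hSBsub hb2S
  -- vertex decompositions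
  have vertex_eq : ∀ (u a b p q r : ℝ × ℝ),
      ({v0, v1, v2} : Set (ℝ × ℝ)) = {p, q, r} →
      a ∈ A → b ∈ B →
      (∀ x ∈ A, Lf u x ≤ Lf u a) → (∀ x ∈ B, Lf u x ≤ Lf u b) →
      Lf u q < Lf u p → Lf u r < Lf u p →
      a + b = p := by
    intro u a b p q r hset haA hbB hamax hbmax hq hr
    have hmem : a + b ∈ convexHull ℝ ({p, q, r} : Set (ℝ × ℝ)) := by
      rw [← hset, hsum]; exact Set.add_mem_add haA hbB
    have hpmem : p ∈ A + B := by
      rw [← hsum, hset]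
      exact subset_convexHull ℝ _ (by simp)
    obtain ⟨x, hxA, y, hyB, hxy⟩ := Set.mem_add.mp hpmem
    refine eq_vertex hmem hq hr ?_
    calc Lf u p = Lf u x + Lf u y := by rw [← hxy, Lf_add]
      _ ≤ Lf u a + Lf u b := add_le_add (hamax x hxA) (hbmax y hyB)
      _ = Lf u (a + b) := (Lf_add u a b).symm
  have hset1 : ({v0, v1, v2} : Set (ℝ × ℝ)) = {v1, v0, v2} := Set.insert_comm v0 v1 {v2}
  have hset2 : ({v0, v1, v2} : Set (ℝ × ℝ)) = {v2, v0, v1} := by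
    ext z; simp [Set.mem_insert_iff]; tauto
  have hV0 : a0 + b0 = v0 := by
    refine vertex_eq u1 a0 b0 v0 v1 v2 rfl ha0A hb0B ha0max hb0max ?_ ?_
    · simp [Lf, hu1def, hv0def, hv1def]; nlinarith
    · simp [Lf, hu1def, hv0def, hv2def]; nlinarith
  have hV1 : a1 + b1 = v1 := by
    refine vertex_eq u2 a1 b1 v1 v0 v2 hset1 ha1A hb1B ha1max hb1max ?_ ?_
    · simp [Lf, hu2def, hv0def, hv1def]; nlinarith
    · simp [Lf, hu2def, hv1def, hv2def]; nlinarith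
  have hV2 : a2 + b2 = v2 := by
    refine vertex_eq u3 a2 b2 v2 v0 v1 hset2 ha2A hb2B ha2max hb2max ?_ ?_
    · simp [Lf, hu3def, hv0def, hv2def]; nlinarith
    · simp [Lf, hu3def, hv1def, hv2def]; nlinarith
  -- edge equalities
  have hTb : ∀ (w v : ℝ × ℝ), (Lf w v0 ≤ Lf w v) → (Lf w v1 ≤ Lf w v) → (Lf w v2 ≤ Lf w v) →
      ∀ x ∈ A + B, Lf w x ≤ Lf w v := by
    intro w v h0 h1 h2 x hx
    rw [← hsum] at hx
    refine hull_bound ?_ x hx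
    intro p hp
    rcases hp with rfl | rfl | rfl
    exacts [h0, h1, h2]
  have hE1 := edge_eq (w := w1)
      (hTb w1 v0 le_rfl (by simp [Lf, hw1def, hv0def, hv1def])
        (by simp [Lf, hw1def, hv0def, hv2def]; nlinarith))
      (show Lf w1 v1 = Lf w1 v0 by simp [Lf, hw1def, hv0def, hv1def])
      hV0 hV1 (hSAsub hcA1S) (hSBsub hcB1S) hcA1max hcB1max ha0A ha1A hb0B hb1B
  have hE2 := edge_eq (w := w2)
      (hTb w2 v1 (by simp [Lf, hw2def, hv0def, hv1def]) le_rfl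
        (by simp [Lf, hw2def, hv1def, hv2def]))
      (show Lf w2 v2 = Lf w2 v1 by simp [Lf, hw2def, hv1def, hv2def])
      hV1 hV2 (hSAsub hcA2S) (hSBsub hcB2S) hcA2max hcB2max ha1A ha2A hb1B hb2B
  have hE3 := edge_eq (w := w3)
      (hTb w3 v0 le_rfl (by simp [Lf, hw3def, hv0def, hv1def]; nlinarith)
        (by simp [Lf, hw3def, hv0def, hv2def]))
      (show Lf w3 v2 = Lf w3 v0 by simp [Lf, hw3def, hv0def, hv2def])
      hV0 hV2 (hSAsub hcA3S) (hSBsub hcB3S) hcA3max hcB3max ha0A ha2A hb0B hb2B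
  obtain ⟨e1a, e1b⟩ := hE1
  obtain ⟨e2a, e2b⟩ := hE2
  obtain ⟨e3a, e3b⟩ := hE3
  -- integer coordinates
  obtain ⟨mA0, nA0, hza0⟩ := hSAint a0 ha0S
  obtain ⟨mA1, nA1, hza1⟩ := hSAint a1 ha1S
  obtain ⟨mB0, nB0, hzb0⟩ := hSBint b0 hb0S
  obtain ⟨mB1, nB1, hzb1⟩ := hSBint b1 hb1S
  -- real coordinate relations
  have r1a : (nA1 : ℝ) - nA0 = ((d : ℝ) - 1) * ((mA1 : ℝ) - mA0) := by
    have := e1a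
    rw [hza0, hza1] at this
    simp [Lf, hw1def] at this
    linarith
  have r1b : (nB1 : ℝ) - nB0 = ((d : ℝ) - 1) * ((mB1 : ℝ) - mB0) := by
    have := e1b
    rw [hzb0, hzb1] at this
    simp [Lf, hw1def] at this
    linarith
  have ya : (nA0 : ℝ) ≤ (nA1 : ℝ) := by
    have := ha1max a0 ha0A
    rw [hza0, hza1] at this
    simpa [Lf, hu2def] using this
  have yb : (nB0 : ℝ) ≤ (nB1 : ℝ) := by
    have := hb1max b0 hb0B
    rw [hzb0, hzb1] at this
    simpa [Lf, hu2def] using this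
  have kA_nonneg : (0 : ℤ) ≤ mA1 - mA0 := by
    have : (0 : ℝ) ≤ (mA1 : ℝ) - mA0 := by nlinarith
    exact_mod_cast this
  have kB_nonneg : (0 : ℤ) ≤ mB1 - mB0 := by
    have : (0 : ℝ) ≤ (mB1 : ℝ) - mB0 := by nlinarith
    exact_mod_cast this
  have ksum : (mA1 - mA0) + (mB1 - mB0) = 1 := by
    have h1 : (mA1 : ℝ) + mB1 = 1 := by
      have := congrArg Prod.fst hV1
      rw [hza1, hzb1] at this
      simpa [hv1def] using this
    have h0 : (mA0 : ℝ) + mB0 = 0 := by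
      have := congrArg Prod.fst hV0
      rw [hza0, hzb0] at this
      simpa [hv0def] using this
    have : ((mA1 - mA0) + (mB1 - mB0) : ℝ) = 1 := by push_cast; linarith
    exact_mod_cast this
  have hcase : mA1 - mA0 = 0 ∨ mB1 - mB0 = 0 := by omega
  rcases hcase with hk | hk
  · -- A is a singleton
    left
    have hm : (mA1 : ℝ) = mA0 := by exact_mod_cast (by omega : mA1 = mA0)
    have hn : (nA1 : ℝ) = nA0 := by rw [hm] at r1a; linarith [r1a]
    have ha10 : a1 = a0 := by rw [hza0, hza1, hm, hn]
    -- a2 coordinates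
    have h3 : a2.2 = a0.2 := by
      have := e3a; simp [Lf, hw3def] at this; linarith
    have h2 : a2.1 + a2.2 = a0.1 + a0.2 := by
      have := e2a; rw [ha10] at this; simp [Lf, hw2def] at this; linarith
    have h2' : a2.1 = a0.1 := by linarith
    refine ⟨a0, singleton_of (e := (d : ℝ) - 1) (by linarith) ha0A ?_ ?_ ?_⟩
    · intro x hx
      have := ha0max x hx
      simp [Lf, hu1def] at this
      linarith
    · intro x hx
      have := ha1max x hx
      rw [ha10] at this
      simp [Lf, hu2def] at this
      linarith
    · intro x hx
      have := ha2max x hx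
      simp [Lf, hu3def] at this
      linarith [h2']
  · -- B is a singleton
    right
    have hm : (mB1 : ℝ) = mB0 := by exact_mod_cast (by omega : mB1 = mB0)
    have hn : (nB1 : ℝ) = nB0 := by rw [hm] at r1b; linarith [r1b]
    have hb10 : b1 = b0 := by rw [hzb0, hzb1, hm, hn]
    have h3 : b2.2 = b0.2 := by
      have := e3b; simp [Lf, hw3def] at this; linarith
    have h2 : b2.1 + b2.2 = b0.1 + b0.2 := by
      have := e2b; rw [hb10] at this; simp [Lf, hw2def] at this; linarith
    have h2' : b2.1 = b0.1 := by linarith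
    refine ⟨b0, singleton_of (e := (d : ℝ) - 1) (by linarith) hb0B ?_ ?_ ?_⟩
    · intro x hx
      have := hb0max x hx
      simp [Lf, hu1def] at this
      linarith
    · intro x hx
      have := hb1max x hx
      rw [hb10] at this
      simp [Lf, hu2def] at this
      linarith
    · intro x hx
      have := hb2max x hx
      simp [Lf, hu3def] at this
      linarith [h2']
end

section
/- Let k be a field, let f ∈ k[X] be a univariate polynomial with d = deg f > 0 such that the characteristic of k does not divide d (this is automatic in characteristic 0), and let a ∈ k with a ≠ 0. Then the bivariate polynomial F(x,y) = f(x) − f(y) + a ∈ k[x,y] is absolutely irreducible, i.e. its image in K[x,y] is irreducible for K the algebraic closure of k (equivalently, it remains irreducible over every algebraic field extension of k). -/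
/-!
Put `F = f(x) - f(y) + a` and `d = deg f`. The top homogeneous component of `F` is
`c (x^d - y^d)`, while on the diagonal `x = y` (the substitution `rename (fun _ => 0)`)
`F` restricts to the nonzero constant `a`. If `F = G H` with `G, H` nonconstant, then
`G` and `H` are constant on the diagonal, so their top components vanish there and are
divisible by `x - y`. Their product, the top component of `F`, is then divisible by
`(x - y)^2`; but setting `y = 1` would make `X^d - 1` inseparable, which it is not
when `d ≠ 0` in the field. This works over every field, in particular the algebraic closure.
-/

namespace MvPolynomial

section CommSemiring

variable {σ R : Type*} [CommSemiring R]

theorem homogeneousComponent_totalDegree_add_mul (p q : MvPolynomial σ R) :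
    homogeneousComponent (p.totalDegree + q.totalDegree) (p * q) =
      homogeneousComponent p.totalDegree p * homogeneousComponent q.totalDegree q := by
  set m := p.totalDegree
  set n := q.totalDegree
  have hom (i j : ℕ) := (homogeneousComponent_isHomogeneous i p).mul
    (homogeneousComponent_isHomogeneous j q)
  conv_lhs => rw [← sum_homogeneousComponent p, ← sum_homogeneousComponent q]
  rw [Finset.sum_mul_sum, ← Finset.sum_product', map_sum, Finset.sum_eq_single (m, n)]
  · exact homogeneousComponent_eq_self (hom m n)
  · rintro ⟨i, j⟩ hij hne
    simp only [Finset.mem_product, Finset.mem_range] at hij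
    rw [homogeneousComponent_of_mem (hom i j), if_neg]
    -- `i ≤ m` and `j ≤ n`, so `m + n = i + j` forces `(i, j) = (m, n)`
    intro h
    apply hne
    ext <;> simp <;> omega
  · simp [m, n]

theorem aeval_X_eq_sum_C_mul_X_pow (f : Polynomial R) (i : σ) :
    Polynomial.aeval (X i : MvPolynomial σ R) f =
      ∑ j ∈ Finset.range (f.natDegree + 1), C (f.coeff j) * X i ^ j := by
  simp_rw [Polynomial.aeval_eq_sum_range, smul_eq_C_mul]

theorem totalDegree_aeval_X_le (f : Polynomial R) (i : σ) :
    (Polynomial.aeval (X i : MvPolynomial σ R) f).totalDegree ≤ f.natDegree := by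
  rw [aeval_X_eq_sum_C_mul_X_pow]
  refine (totalDegree_finsetSum _ _).trans (Finset.sup_le fun j hj => ?_)
  exact (isHomogeneous_C_mul_X_pow _ i j).totalDegree_le.trans
    (Nat.lt_succ_iff.mp (Finset.mem_range.mp hj))

theorem homogeneousComponent_natDegree_aeval_X (f : Polynomial R) (i : σ) :
    homogeneousComponent f.natDegree (Polynomial.aeval (X i : MvPolynomial σ R) f) =
      C f.leadingCoeff * X i ^ f.natDegree := by
  rw [aeval_X_eq_sum_C_mul_X_pow, map_sum]
  simp_rw [homogeneousComponent_of_mem (isHomogeneous_C_mul_X_pow _ i _), Finset.sum_ite_eq,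
    Finset.mem_range, Nat.lt_succ_self, if_true]
  rfl

end CommSemiring

section CommRing

variable {R : Type*} [CommRing R]

theorem finSuccEquiv_X_one :
    finSuccEquiv R 1 (X 1) = Polynomial.C (X 0) :=
  finSuccEquiv_X_succ (j := 0)

theorem eval_X_finSuccEquiv_eq_rename (P : MvPolynomial (Fin 2) R) :
    (finSuccEquiv R 1 P).eval (X 0) = rename (fun _ => 0) P := by
  induction P using MvPolynomial.induction_on with
  | C r => simp [finSuccEquiv_apply]
  | add p q hp hq => simp [hp, hq]
  | mul_X p i hp => fin_cases i <;> simp [hp, finSuccEquiv_X_zero, finSuccEquiv_X_one]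

theorem X_sub_X_dvd_of_rename_eq_zero {P : MvPolynomial (Fin 2) R}
    (hP : rename (fun _ => (0 : Fin 1)) P = 0) : X 0 - X 1 ∣ P := by
  have hroot : (finSuccEquiv R 1 P).IsRoot (X 0) := by
    rw [Polynomial.IsRoot, eval_X_finSuccEquiv_eq_rename, hP]
  have hXY : finSuccEquiv R 1 (X 0 - X 1) = Polynomial.X - Polynomial.C (X 0) := by
    rw [map_sub, finSuccEquiv_X_zero, finSuccEquiv_X_one]
  simpa [← hXY] using map_dvd (finSuccEquiv R 1).symm (Polynomial.dvd_iff_isRoot.mpr hroot)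

theorem X_sub_X_dvd_homogeneousComponent_totalDegree [IsReduced R] {P : MvPolynomial (Fin 2) R}
    (hP : ¬ IsUnit P) (hdiag : IsUnit (rename (fun _ => (0 : Fin 1)) P)) :
    X 0 - X 1 ∣ homogeneousComponent P.totalDegree P := by
  obtain ⟨r, hr_unit, hr⟩ := isUnit_iff_eq_C_of_isReduced.mp hdiag
  have hcoeff : IsUnit (coeff 0 P) := by
    rwa [← constantCoeff_eq, ← constantCoeff_rename (fun _ => (0 : Fin 1)), hr, constantCoeff_C]
  have hdeg : P.totalDegree ≠ 0 := fun h =>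
    hP (isUnit_iff_totalDegree_of_isReduced.mpr ⟨hcoeff, h⟩)
  apply X_sub_X_dvd_of_rename_eq_zero
  rw [rename_homogeneousComponent, hr, homogeneousComponent_eq_zero]
  rw [totalDegree_C]
  exact Nat.pos_of_ne_zero hdeg

theorem irreducible_of_isUnit_rename [IsDomain R] {F : MvPolynomial (Fin 2) R} (hF : ¬ IsUnit F)
    (hdiag : IsUnit (rename (fun _ => (0 : Fin 1)) F))
    (htop : ¬ (X 0 - X 1) ^ 2 ∣ homogeneousComponent F.totalDegree F) : Irreducible F := by
  refine ⟨hF, fun G H hGH => ?_⟩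
  by_contra! ⟨hG, hH⟩
  rw [hGH, map_mul] at hdiag
  have hG0 : G ≠ 0 := by rintro rfl; simp at hdiag
  have hH0 : H ≠ 0 := by rintro rfl; simp at hdiag
  apply htop
  rw [hGH, totalDegree_mul_of_isDomain hG0 hH0, homogeneousComponent_totalDegree_add_mul, sq]
  exact mul_dvd_mul
    (X_sub_X_dvd_homogeneousComponent_totalDegree hG (isUnit_of_mul_isUnit_left hdiag))
    (X_sub_X_dvd_homogeneousComponent_totalDegree hH (isUnit_of_mul_isUnit_right hdiag))

end CommRing

section Field

variable {K : Type*} [Field K]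

theorem not_sq_X_sub_X_dvd_X_pow_sub_X_pow {n : ℕ} (hn : (n : K) ≠ 0) :
    ¬ (X 0 - X 1 : MvPolynomial (Fin 2) K) ^ 2 ∣ X 0 ^ n - X 1 ^ n := by
  intro h
  have h1 := map_dvd (aeval ![(Polynomial.X : Polynomial K), 1]) h
  simp only [map_pow, map_sub, aeval_X, Matrix.cons_val_zero, Matrix.cons_val_one, one_pow,
    sq] at h1
  exact Polynomial.not_isUnit_X_sub_C (1 : K)
    ((Polynomial.separable_X_pow_sub_C (1 : K) hn one_ne_zero).squarefree _ (by simpa using h1))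

theorem irreducible_aeval_X_sub_aeval_X_add_C (f : Polynomial K) (hd : (f.natDegree : K) ≠ 0)
    {a : K} (ha : a ≠ 0) :
    Irreducible (Polynomial.aeval (X 0 : MvPolynomial (Fin 2) K) f
      - Polynomial.aeval (X 1 : MvPolynomial (Fin 2) K) f + C a) := by
  set F := Polynomial.aeval (X 0 : MvPolynomial (Fin 2) K) f
      - Polynomial.aeval (X 1 : MvPolynomial (Fin 2) K) f + C a
  set d := f.natDegree
  have hd0 : d ≠ 0 := by rintro h; simp [h] at hd
  have hc : IsUnit (C f.leadingCoeff : MvPolynomial (Fin 2) K) :=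
    (Polynomial.leadingCoeff_ne_zero.mpr (by rintro rfl; simp [d] at hd0)).isUnit.map C
  have htop : ¬ (X 0 - X 1) ^ 2 ∣ homogeneousComponent d F := by
    have hCa : homogeneousComponent d (C a : MvPolynomial (Fin 2) K) = 0 :=
      homogeneousComponent_eq_zero _ _ (by rw [totalDegree_C]; exact Nat.pos_of_ne_zero hd0)
    rw [map_add, map_sub, homogeneousComponent_natDegree_aeval_X,
      homogeneousComponent_natDegree_aeval_X, hCa, add_zero, ← mul_sub, hc.dvd_mul_left]
    exact not_sq_X_sub_X_dvd_X_pow_sub_X_pow hd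
  have hdeg : F.totalDegree = d := by
    refine le_antisymm ?_ (le_of_not_gt fun h => htop ?_)
    · refine (totalDegree_add _ _).trans (max_le ((totalDegree_sub _ _).trans (max_le ?_ ?_)) ?_)
      · exact totalDegree_aeval_X_le f 0
      · exact totalDegree_aeval_X_le f 1
      · simp
    · rw [homogeneousComponent_eq_zero _ _ h]
      exact dvd_zero _
  have hdiag : rename (fun _ => (0 : Fin 1)) F = C a := by
    simp [F, ← Polynomial.aeval_algHom_apply]
  refine irreducible_of_isUnit_rename ?_ (hdiag ▸ ha.isUnit.map C) (hdeg ▸ htop)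
  rw [isUnit_iff_totalDegree_of_isReduced, hdeg]
  exact fun h => hd0 h.2

end Field

end MvPolynomial

open MvPolynomial

theorem sub_shift_absolutely_irreducible_general {k : Type*} [Field k]
    (f : Polynomial k) (hchar : ¬ (ringChar k ∣ f.natDegree))
    (a : k) (ha : a ≠ 0) :
    Irreducible
      (MvPolynomial.map (algebraMap k (AlgebraicClosure k))
        (Polynomial.aeval (MvPolynomial.X 0 : MvPolynomial (Fin 2) k) f
          - Polynomial.aeval (MvPolynomial.X 1 : MvPolynomial (Fin 2) k) f
          + MvPolynomial.C a)) := by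
  set φ := algebraMap k (AlgebraicClosure k)
  have hφ : (algebraMap _ (MvPolynomial (Fin 2) _)).comp φ =
      (MvPolynomial.map φ).comp (algebraMap k (MvPolynomial (Fin 2) k)) :=
    RingHom.ext fun r => (map_C φ r).symm
  have hd : ((f.map φ).natDegree : AlgebraicClosure k) ≠ 0 := by
    rw [Polynomial.natDegree_map, ← map_natCast φ, map_ne_zero]
    exact fun h => hchar ((ringChar.spec k _).mp h)
  rw [map_add, map_sub, Polynomial.map_aeval_eq_aeval_map hφ,
    Polynomial.map_aeval_eq_aeval_map hφ, map_C, map_X, map_X]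
  exact irreducible_aeval_X_sub_aeval_X_add_C _ hd ((map_ne_zero φ).mpr ha)

/-- For a field `k`, a polynomial `f ∈ k[X]` of degree `d > 0` with the
characteristic of `k` not dividing `d`, and `a ∈ k` nonzero, the bivariate polynomial
`f(x) - f(y) + a` is absolutely irreducible, i.e. irreducible over the algebraic closure. -/
theorem sub_shift_absolutely_irreducible {k : Type*} [Field k]
    (f : Polynomial k) (hd : 0 < f.natDegree) (hchar : ¬ (ringChar k ∣ f.natDegree))
    (a : k) (ha : a ≠ 0) :
    Irreducible
      (MvPolynomial.map (algebraMap k (AlgebraicClosure k))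
        (Polynomial.aeval (MvPolynomial.X 0 : MvPolynomial (Fin 2) k) f
          - Polynomial.aeval (MvPolynomial.X 1 : MvPolynomial (Fin 2) k) f
          + MvPolynomial.C a)) :=
  sub_shift_absolutely_irreducible_general f hchar a ha
end

section
/- Let 𝔽_q be a finite field of odd characteristic, let f ∈ 𝔽_q[X] be a polynomial of degree d > 0 with gcd(d, q) = 1 such that f(−X) = −f(X) as polynomials, and let b ∈ 𝔽_q with b ≠ 0. Then the bivariate polynomial f(x + y) + f(x) + b ∈ 𝔽_q[x,y] is absolutely irreducible, i.e. its image in K[x,y] is irreducible for K the algebraic closure of 𝔽_q. -/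
/-!
Write `d = deg f` and `p = char 𝔽`. Over `L = 𝔽̄` substitute `x = w - z`, `y = 2z`, which is
invertible as `p ≠ 2`. Since `f` is odd, `f(x + y) + f(x) + b` becomes
`H = f(z + w) - f(z - w) + b ∈ L[w][z]`. Reduced modulo `w`, `H` is the unit `b`; for `d ≥ 2`
its `z`-degree is `d - 1` with leading coefficient `2d · lc(f) · w`, an associate of the prime `w`
because `p ∤ 2d`. Such a polynomial is irreducible: a factor of positive degree is a unit modulo
`w`, so `w` divides its leading coefficient, and two such factors would give `w² ∣ w`, while a
constant factor divides `w` but is nonzero modulo `w`. For `d = 1`, `H` is linear in `w` alone.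
-/

open Polynomial

namespace Polynomial

section

variable {R S : Type*} [CommRing R] [IsDomain R] [CommRing S] [IsDomain S]

theorem irreducible_of_isUnit_map_of_associated_leadingCoeff (φ : R →+* S) {p : R}
    (hp : Prime p) (hker : ∀ r, φ r = 0 ↔ p ∣ r) {F : R[X]} (hF : 0 < F.natDegree)
    (hunit : IsUnit (F.map φ)) (hlc : Associated p F.leadingCoeff) : Irreducible F := by
  have dvd_leadingCoeff {G H : R[X]} (hGH : F = G * H) (hG : 0 < G.natDegree) :
      p ∣ G.leadingCoeff := by
    have hGφ : IsUnit (G.map φ) := by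
      rw [hGH, Polynomial.map_mul] at hunit
      exact isUnit_of_mul_isUnit_left hunit
    rw [← hker, leadingCoeff, ← coeff_map]
    exact coeff_eq_zero_of_natDegree_lt (by rw [natDegree_eq_zero_of_isUnit hGφ]; exact hG)
  have isUnit_of_natDegree_eq_zero {G H : R[X]} (hGH : F = G * H) (hG : G.natDegree = 0) :
      IsUnit G := by
    obtain ⟨g₀, rfl⟩ : ∃ g₀, G = C g₀ := ⟨_, eq_C_of_natDegree_eq_zero hG⟩
    have hGφ : IsUnit (φ g₀) := by
      rw [hGH, Polynomial.map_mul, map_C] at hunit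
      exact isUnit_C.1 (isUnit_of_mul_isUnit_left hunit)
    have hpg₀ : ¬ p ∣ g₀ := by rw [← hker]; exact hGφ.ne_zero
    obtain ⟨k, hk⟩ : g₀ ∣ p := by
      rw [hlc.dvd_iff_dvd_right, hGH, leadingCoeff_mul, leadingCoeff_C]
      exact dvd_mul_right _ _
    refine isUnit_C.2 ((hp.irreducible.isUnit_or_isUnit hk).resolve_right fun hu => hpg₀ ?_)
    exact hk ▸ (associated_mul_unit_right g₀ k hu).dvd'
  refine ⟨not_isUnit_of_natDegree_pos F hF, fun P Q hPQ => ?_⟩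
  rcases Nat.eq_zero_or_pos P.natDegree with hP | hP
  · exact .inl (isUnit_of_natDegree_eq_zero hPQ hP)
  rcases Nat.eq_zero_or_pos Q.natDegree with hQ | hQ
  · exact .inr (isUnit_of_natDegree_eq_zero (hPQ.trans (mul_comm P Q)) hQ)
  have hpp : p * p ∣ p * 1 := by
    rw [mul_one, hlc.dvd_iff_dvd_right, hPQ, leadingCoeff_mul]
    exact mul_dvd_mul (dvd_leadingCoeff hPQ hP) (dvd_leadingCoeff (hPQ.trans (mul_comm P Q)) hQ)
  exact (hp.not_isUnit (isUnit_of_dvd_one ((mul_dvd_mul_iff_left hp.ne_zero).1 hpp))).elim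

end

section Taylor

variable {A : Type*} [CommRing A]

theorem eval_sub_eval_neg_of_natDegree_le_one {q : A[X]} (hq : q.natDegree ≤ 1) (a : A) :
    q.eval a - q.eval (-a) = 2 * q.coeff 1 * a := by
  rw [eq_X_add_C_of_natDegree_le_one hq]
  simp only [eval_add, eval_mul, eval_C, eval_X, coeff_add, coeff_C_mul, coeff_X_one, coeff_C,
    one_ne_zero, if_false]
  ring

theorem natDegree_taylor_sub_taylor_neg_le (p : A[X]) (a : A) :
    (taylor a p - taylor (-a) p).natDegree ≤ p.natDegree - 1 := by
  refine natDegree_le_pred ?_ ?_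
  · exact (natDegree_sub_le _ _).trans (by rw [natDegree_taylor, natDegree_taylor, max_self])
  · rw [coeff_sub, coeff_taylor_natDegree, coeff_taylor_natDegree, sub_self]

theorem coeff_taylor_sub_taylor_neg_natDegree_sub_one {p : A[X]} (hp : 0 < p.natDegree)
    (a : A) : (taylor a p - taylor (-a) p).coeff (p.natDegree - 1) =
      2 * p.natDegree * p.leadingCoeff * a := by
  have hle : (hasseDeriv (p.natDegree - 1) p).natDegree ≤ 1 :=
    (natDegree_hasseDeriv_le _ _).trans (by omega)
  have hd : 1 + (p.natDegree - 1) = p.natDegree := by omega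
  rw [coeff_sub, taylor_coeff, taylor_coeff, eval_sub_eval_neg_of_natDegree_le_one hle,
    hasseDeriv_coeff, hd, ← Nat.choose_symm_of_eq_add hd.symm, Nat.choose_one_right, leadingCoeff]
  ring

end Taylor

theorem irreducible_taylor_X_sub_taylor_neg_X_add_C {L : Type*} [Field L] {g : L[X]}
    (hg : 0 < g.natDegree) (h2d : (2 * g.natDegree : L) ≠ 0) {b : L} (hb : b ≠ 0) :
    Irreducible (taylor X (g.map C) - taylor (-X) (g.map C) + C (C b)) := by
  set d := g.natDegree
  set D := taylor X (g.map C) - taylor (-X) (g.map C)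
  have hGdeg : (g.map C).natDegree = d := natDegree_map_eq_of_injective C_injective g
  have hc : 2 * d * g.leadingCoeff ≠ 0 :=
    mul_ne_zero h2d (leadingCoeff_ne_zero.2 (ne_zero_of_natDegree_gt hg))
  have hDdeg : D.natDegree ≤ d - 1 := hGdeg ▸ natDegree_taylor_sub_taylor_neg_le _ _
  have hDcoeff : D.coeff (d - 1) = C (2 * d * g.leadingCoeff) * X := by
    rw [← hGdeg, coeff_taylor_sub_taylor_neg_natDegree_sub_one (hGdeg ▸ hg),
      leadingCoeff_map_of_injective C_injective, hGdeg]
    simp only [map_mul, map_ofNat, map_natCast]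
  obtain hd | hd : d = 1 ∨ 1 < d := by omega
  · have hD : D = C (C (2 * d * g.leadingCoeff) * X) := by
      rw [eq_C_of_natDegree_le_zero (p := D) (by omega), ← hDcoeff, hd]
    rw [hD, ← C_add]
    have hlin : Irreducible (C (2 * d * g.leadingCoeff) * X + C b) :=
      irreducible_of_degree_eq_one (degree_linear hc)
    exact (prime_C_iff.2 hlin.prime).irreducible
  · have hHdeg : (D + C (C b)).natDegree = d - 1 := by
      rw [natDegree_add_C]
      refine natDegree_eq_of_le_of_coeff_ne_zero hDdeg ?_
      rw [hDcoeff]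
      exact mul_ne_zero (C_ne_zero.2 hc) X_ne_zero
    refine irreducible_of_isUnit_map_of_associated_leadingCoeff constantCoeff prime_X
      (fun r => X_dvd_iff.symm) (by omega) ?_ ?_
    · simp [D, hb]
    · rw [leadingCoeff, hHdeg, coeff_add, hDcoeff, coeff_C, if_neg (by omega), add_zero]
      exact (associated_unit_mul_left X _ (isUnit_C.2 (isUnit_iff_ne_zero.2 hc))).symm

theorem aeval_neg_of_comp_neg_X_eq_neg {R A : Type*} [CommRing R] [CommRing A] [Algebra R A]
    {g : R[X]} (hodd : g.comp (-X) = -g) (t : A) : aeval (-t) g = -aeval t g := by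
  rw [← map_neg, ← hodd, aeval_comp, map_neg, aeval_X]

theorem aeval_X_add_C_eq_taylor {R A : Type*} [CommRing R] [CommRing A] [Algebra R A]
    (g : R[X]) (t : A) : aeval (X + C t) g = taylor t (g.map (algebraMap R A)) := by
  rw [taylor_apply, comp_eq_aeval, aeval_map_algebraMap]

end Polynomial

theorem map_invOf_two_mul_two {R A F : Type*} [CommRing R] [Invertible (2 : R)] [Semiring A]
    [FunLike F R A] [RingHomClass F R A] (f : F) : f ⅟2 * 2 = 1 := by
  rw [← map_ofNat f 2, ← map_mul, invOf_mul_self, map_one]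

namespace MvPolynomial

variable {R : Type*} [CommRing R] [Invertible (2 : R)]

/-- `x ↦ w - z`, `y ↦ 2z`, where `w` is the inner and `z` the outer variable of `R[X][X]`. -/
noncomputable def addSubEquiv : MvPolynomial (Fin 2) R ≃ₐ[R] R[X][X] :=
  AlgEquiv.ofAlgHom (aeval ![Polynomial.C Polynomial.X - Polynomial.X, 2 * Polynomial.X])
    (Polynomial.aevalTower (Polynomial.aeval (X 0 + C (⅟2 : R) * X 1)) (C (⅟2 : R) * X 1))
    (by
      have half : Polynomial.C (Polynomial.C (⅟2 : R)) * 2 = 1 :=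
        map_invOf_two_mul_two (Polynomial.C.comp Polynomial.C)
      refine Polynomial.algHom_ext' (Polynomial.algHom_ext ?_) ?_ <;> simp [← mul_assoc, half])
    (by
      have half : (2 : MvPolynomial (Fin 2) R) * C ⅟2 = 1 := by
        rw [mul_comm]; exact map_invOf_two_mul_two C
      refine algHom_ext fun i => ?_
      fin_cases i <;> simp [map_ofNat, ← mul_assoc, half])

theorem addSubEquiv_X_zero :
    addSubEquiv (X 0 : MvPolynomial (Fin 2) R) = Polynomial.C Polynomial.X - Polynomial.X := by
  simp [addSubEquiv]

theorem addSubEquiv_X_one : addSubEquiv (X 1 : MvPolynomial (Fin 2) R) = 2 * Polynomial.X := by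
  simp [addSubEquiv]

theorem addSubEquiv_aeval_add_aeval_add_C {g : R[X]} (hodd : g.comp (-Polynomial.X) = -g)
    (b : R) :
    addSubEquiv (Polynomial.aeval (X 0 + X 1) g + Polynomial.aeval (X 0) g + C b) =
      taylor Polynomial.X (g.map Polynomial.C) - taylor (-Polynomial.X) (g.map Polynomial.C)
        + Polynomial.C (Polynomial.C b) := by
  have hsum : addSubEquiv (X 0 + X 1 : MvPolynomial (Fin 2) R) =
      Polynomial.X + Polynomial.C Polynomial.X := by
    rw [map_add, addSubEquiv_X_zero, addSubEquiv_X_one]; ring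
  have hdiff : addSubEquiv (X 0 : MvPolynomial (Fin 2) R) =
      -(Polynomial.X + Polynomial.C (-Polynomial.X)) := by
    rw [addSubEquiv_X_zero, Polynomial.C_neg]; ring
  rw [map_add, map_add, ← Polynomial.aeval_algHom_apply, ← Polynomial.aeval_algHom_apply, hsum,
    hdiff, aeval_neg_of_comp_neg_X_eq_neg hodd, aeval_X_add_C_eq_taylor, aeval_X_add_C_eq_taylor,
    ← sub_eq_add_neg, ← algebraMap_eq, AlgEquiv.commutes, Polynomial.algebraMap_apply,
    Polynomial.algebraMap_eq]

theorem map_aeval_eq_aeval_map {K L σ : Type*} [CommSemiring K] [CommSemiring L] (φ : K →+* L)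
    (f : K[X]) (t : MvPolynomial σ K) :
    map φ (Polynomial.aeval t f) = Polynomial.aeval (map φ t) (f.map φ) :=
  Polynomial.map_aeval_eq_aeval_map (by ext; simp) f t

end MvPolynomial

theorem FiniteField.natCast_ne_zero_of_coprime_card {K : Type*} [Field K] [Fintype K] {n : ℕ}
    (h : n.Coprime (Fintype.card K)) : (n : K) ≠ 0 := fun hn =>
  CharP.ringChar_ne_one (Nat.eq_one_of_dvd_coprimes h (ringChar.dvd hn)
    (ringChar.dvd (FiniteField.cast_card_eq_zero K)))

/-- For a finite field `𝔽_q` of odd characteristic, an odd polynomial `f`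
(`f(-X) = -f(X)`) of degree `d > 0` with `gcd(d, q) = 1`, and `b ≠ 0`, the bivariate
polynomial `f(x+y) + f(x) + b` is absolutely irreducible over the algebraic closure. -/
theorem odd_poly_sum_absolutely_irreducible {𝔽 : Type*} [Field 𝔽] [Fintype 𝔽]
    (hchar : ringChar 𝔽 ≠ 2)
    (f : Polynomial 𝔽) (hd : 0 < f.natDegree)
    (hcop : Nat.gcd f.natDegree (Fintype.card 𝔽) = 1)
    (hodd : f.comp (-Polynomial.X) = -f)
    (b : 𝔽) (hb : b ≠ 0) :
    Irreducible
      (MvPolynomial.map (algebraMap 𝔽 (AlgebraicClosure 𝔽))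
        (Polynomial.aeval
            ((MvPolynomial.X 0 + MvPolynomial.X 1 : MvPolynomial (Fin 2) 𝔽)) f
          + Polynomial.aeval (MvPolynomial.X 0 : MvPolynomial (Fin 2) 𝔽) f
          + MvPolynomial.C b)) := by
  set φ := algebraMap 𝔽 (AlgebraicClosure 𝔽)
  have hdeg : (f.map φ).natDegree = f.natDegree := natDegree_map φ
  have h2d : (2 * (f.map φ).natDegree : AlgebraicClosure 𝔽) ≠ 0 := by
    rw [hdeg, ← map_natCast φ, ← map_ofNat φ 2, ← map_mul]
    exact (map_ne_zero φ).2
      (mul_ne_zero (Ring.two_ne_zero hchar) (FiniteField.natCast_ne_zero_of_coprime_card hcop))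
  have hodd' : (f.map φ).comp (-X) = -f.map φ := by
    simpa [Polynomial.map_comp] using congrArg (map φ) hodd
  have : Invertible (2 : AlgebraicClosure 𝔽) := invertibleOfNonzero (left_ne_zero_of_mul h2d)
  simp only [map_add, MvPolynomial.map_aeval_eq_aeval_map, MvPolynomial.map_X, MvPolynomial.map_C]
  rw [← MulEquiv.irreducible_iff MvPolynomial.addSubEquiv,
    MvPolynomial.addSubEquiv_aeval_add_aeval_add_C hodd']
  exact irreducible_taylor_X_sub_taylor_neg_X_add_C (hdeg ▸ hd) h2d ((map_ne_zero φ).2 hb)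
end

section
/- Let k be a field, let P = k[x₁,…,xₙ], let 𝓕 ⊆ P be a finite set of nonzero polynomials, and let 𝓕^top = { f^top : f ∈ 𝓕 } be the set of their highest-degree homogeneous components (f^top being the homogeneous component of f of degree equal to the total degree of f). If the quotient P/(𝓕^top) by the ideal generated by 𝓕^top is a finite-dimensional k-vector space of dimension d, then the quotient P/(𝓕) by the ideal generated by 𝓕 is a finite-dimensional k-vector space of dimension at most d. -/
open MvPolynomial

/-! Choose monomials whose images form a basis of `P ⧸ (𝓕^top)` and let `V` be their span, so
that `V + (𝓕^top) = P` and `dim V ≤ d`. Then `V + (𝓕) = P`, degree by degree: the degree-`m` part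
of an element of `(𝓕^top)` is a sum of terms `u * f^top` with `u` homogeneous of degree
`m - deg f`, and `u * f^top = u * f - u * (f - f^top)`, where `u * f ∈ (𝓕)` and
`u * (f - f^top)` has degree `< m`. Hence `V` maps onto `P ⧸ (𝓕)`. -/

open Module Submodule in
theorem Submodule.exists_finite_subset_sup_eq_top_finrank_le {K M : Type*} [DivisionRing K]
    [AddCommGroup M] [Module K M] (W : Submodule K M) [FiniteDimensional K (M ⧸ W)] {s : Set M}
    (hs : span K s = ⊤) :
    ∃ t ⊆ s, t.Finite ∧ span K t ⊔ W = ⊤ ∧ finrank K (span K t) ≤ finrank K (M ⧸ W) := by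
  obtain ⟨κ, a, -, hspan, hli⟩ := exists_linearIndependent' K (W.mkQ ∘ ((↑) : s → M))
  have := hli.finite
  have := Fintype.ofFinite κ
  have hmap : (span K (Set.range ((↑) ∘ a : κ → M))).map W.mkQ = ⊤ := by
    rw [map_span, ← Set.range_comp, ← Function.comp_assoc, hspan, Set.range_comp,
      Subtype.range_coe, ← map_span, hs, map_top, range_mkQ]
  refine ⟨Set.range ((↑) ∘ a), by simp [Set.range_subset_iff], Set.finite_range _,
    sup_comm W _ ▸ (map_mkQ_eq_top W _).mp hmap, ?_⟩
  exact (finrank_range_le_card _).trans hli.fintype_card_le_finrank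

open Module Submodule in
theorem Submodule.finiteDimensional_quotient_and_finrank_le_of_sup_eq_top {K M : Type*}
    [DivisionRing K] [AddCommGroup M] [Module K M] {V W : Submodule K M} [FiniteDimensional K V]
    (h : V ⊔ W = ⊤) : FiniteDimensional K (M ⧸ W) ∧ finrank K (M ⧸ W) ≤ finrank K V := by
  have hsurj : Function.Surjective (W.mkQ ∘ₗ V.subtype) := by
    rw [← LinearMap.range_eq_top, LinearMap.range_comp, range_subtype, map_mkQ_eq_top, sup_comm, h]
  exact ⟨.of_surjective _ hsurj, LinearMap.finrank_le_finrank_of_surjective hsurj⟩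

namespace MvPolynomial

variable {σ R : Type*} [CommRing R]

noncomputable def topHomogeneousComponent (f : MvPolynomial σ R) : MvPolynomial σ R :=
  homogeneousComponent f.totalDegree f

theorem sub_topHomogeneousComponent (f : MvPolynomial σ R) :
    f - topHomogeneousComponent f = ∑ i ∈ Finset.range f.totalDegree, homogeneousComponent i f := by
  rw [sub_eq_iff_eq_add, topHomogeneousComponent, ← Finset.sum_range_succ]
  exact (sum_homogeneousComponent f).symm

theorem topHomogeneousComponent_isHomogeneous (f : MvPolynomial σ R) :
    (topHomogeneousComponent f).IsHomogeneous f.totalDegree :=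
  homogeneousComponent_isHomogeneous _ f

theorem homogeneousComponent_mem_span_of_isHomogeneous {s : Set (MvPolynomial σ R)}
    (hs : ∀ p ∈ s, ∃ n, p.IsHomogeneous n) (i : ℕ) {p : MvPolynomial σ R}
    (hp : p ∈ Submodule.span R s) : homogeneousComponent i p ∈ Submodule.span R s := by
  induction hp using Submodule.span_induction with
  | mem q hq =>
    obtain ⟨n, hn⟩ := hs q hq
    rw [homogeneousComponent_of_mem hn]
    split_ifs
    exacts [Submodule.subset_span hq, zero_mem _]
  | zero => simp
  | add _ _ _ _ hp hq => simpa using add_mem hp hq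
  | smul a _ _ hp => simpa using Submodule.smul_mem _ a hp

section LowerDegrees

variable {F : Set (MvPolynomial σ R)} {S : Submodule R (MvPolynomial σ R)} {m : ℕ}

theorem mul_topHomogeneousComponent_mem (hFS : ∀ p ∈ Ideal.span F, p ∈ S)
    (hlow : ∀ p : MvPolynomial σ R, p.totalDegree < m → p ∈ S) {f u : MvPolynomial σ R}
    (hf : f ∈ F) {i : ℕ} (hu : u.IsHomogeneous i) (him : i + f.totalDegree = m) :
    u * topHomogeneousComponent f ∈ S := by
  have hsplit : u * topHomogeneousComponent f =
      u * f - ∑ j ∈ Finset.range f.totalDegree, u * homogeneousComponent j f := by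
    rw [← Finset.mul_sum, ← sub_topHomogeneousComponent, mul_sub, sub_sub_cancel]
  rw [hsplit]
  refine sub_mem (hFS _ (Ideal.mul_mem_left _ u (Ideal.subset_span hf)))
    (sum_mem fun j hj => hlow _ ?_)
  calc (u * homogeneousComponent j f).totalDegree
      ≤ u.totalDegree + (homogeneousComponent j f).totalDegree := totalDegree_mul _ _
    _ ≤ i + j :=
      add_le_add hu.totalDegree_le (homogeneousComponent_isHomogeneous j f).totalDegree_le
    _ < m := by rw [Finset.mem_range] at hj; omega

theorem homogeneousComponent_mul_topHomogeneousComponent_mem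
    (hFS : ∀ p ∈ Ideal.span F, p ∈ S)
    (hlow : ∀ p : MvPolynomial σ R, p.totalDegree < m → p ∈ S) {f : MvPolynomial σ R} (hf : f ∈ F)
    (c : MvPolynomial σ R) : homogeneousComponent m (c * topHomogeneousComponent f) ∈ S := by
  rw [← sum_homogeneousComponent c, Finset.sum_mul, map_sum]
  refine sum_mem fun i _ => ?_
  rw [homogeneousComponent_of_mem ((homogeneousComponent_isHomogeneous i c).mul
    (topHomogeneousComponent_isHomogeneous f))]
  split_ifs with h
  exacts [mul_topHomogeneousComponent_mem hFS hlow hf (homogeneousComponent_isHomogeneous i c)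
    h.symm, zero_mem _]

theorem homogeneousComponent_mem_of_mem_span_topHomogeneousComponent
    (hFS : ∀ p ∈ Ideal.span F, p ∈ S)
    (hlow : ∀ p : MvPolynomial σ R, p.totalDegree < m → p ∈ S) {p : MvPolynomial σ R}
    (hp : p ∈ Ideal.span (topHomogeneousComponent '' F)) : homogeneousComponent m p ∈ S := by
  suffices ∀ c, homogeneousComponent m (c * p) ∈ S by simpa using this 1
  induction hp using Submodule.span_induction with
  | mem _ hq =>
    obtain ⟨f, hf, rfl⟩ := hq
    exact homogeneousComponent_mul_topHomogeneousComponent_mem hFS hlow hf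
  | zero => simp
  | add _ _ _ _ hp hq => exact fun c => by simpa [mul_add] using add_mem (hp c) (hq c)
  | smul a _ _ hp => exact fun c => by simpa [mul_assoc] using hp (c * a)

end LowerDegrees

theorem sup_span_eq_top_of_sup_span_topHomogeneousComponent_eq_top {F : Set (MvPolynomial σ R)}
    {V : Submodule R (MvPolynomial σ R)} (hV : ∀ i, ∀ p ∈ V, homogeneousComponent i p ∈ V)
    (hVF : V ⊔ (Ideal.span (topHomogeneousComponent '' F)).restrictScalars R = ⊤) :
    V ⊔ (Ideal.span F).restrictScalars R = ⊤ := by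
  set S := V ⊔ (Ideal.span F).restrictScalars R
  have hFS : ∀ p ∈ Ideal.span F, p ∈ S := fun p hp => Submodule.mem_sup_right hp
  have hcomp : ∀ m, (∀ p : MvPolynomial σ R, p.totalDegree < m → p ∈ S) →
      ∀ p, homogeneousComponent m p ∈ S := by
    intro m hlow p
    obtain ⟨q, hq, j, hj, rfl⟩ := Submodule.mem_sup.mp (hVF ▸ Submodule.mem_top : p ∈ _)
    rw [map_add]
    exact add_mem (Submodule.mem_sup_left (hV m q hq))
      (homogeneousComponent_mem_of_mem_span_topHomogeneousComponent hFS hlow hj)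
  have hdeg : ∀ m, ∀ p : MvPolynomial σ R, p.totalDegree < m → p ∈ S := by
    intro m
    induction m with
    | zero => simp
    | succ m ih =>
      intro p hp
      rw [← sum_homogeneousComponent p]
      refine sum_mem fun i hi => hcomp i (fun q hq => ih q ?_) p
      rw [Finset.mem_range] at hi
      omega
  exact Submodule.eq_top_iff'.mpr fun p => hdeg _ p p.totalDegree.lt_succ_self

open Submodule in
theorem finiteDimensional_quotient_span_and_finrank_le {k : Type*} [Field k]
    (F : Set (MvPolynomial σ k))
    [FiniteDimensional k (MvPolynomial σ k ⧸ Ideal.span (topHomogeneousComponent '' F))] :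
    FiniteDimensional k (MvPolynomial σ k ⧸ Ideal.span F) ∧
      Module.finrank k (MvPolynomial σ k ⧸ Ideal.span F) ≤
        Module.finrank k (MvPolynomial σ k ⧸ Ideal.span (topHomogeneousComponent '' F)) := by
  set J := Ideal.span (topHomogeneousComponent '' F)
  have eJ := Quotient.restrictScalarsEquiv k J
  have eI := Quotient.restrictScalarsEquiv k (Ideal.span F)
  have : FiniteDimensional k (_ ⧸ J.restrictScalars k) := .equiv eJ.symm
  obtain ⟨t, ht, htfin, hVJ, hrank⟩ :=
    (J.restrictScalars k).exists_finite_subset_sup_eq_top_finrank_le (basisMonomials σ k).span_eq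
  have hmonomial : ∀ p ∈ t, ∃ i, p.IsHomogeneous i := by
    intro p hp
    obtain ⟨s, rfl⟩ := ht hp
    exact ⟨_, isHomogeneous_monomial _ rfl⟩
  have : FiniteDimensional k (span k t) := .span_of_finite k htfin
  obtain ⟨hfin, hle⟩ := finiteDimensional_quotient_and_finrank_le_of_sup_eq_top
    (sup_span_eq_top_of_sup_span_topHomogeneousComponent_eq_top
      (fun i _ => homogeneousComponent_mem_span_of_isHomogeneous hmonomial i) hVJ)
  refine ⟨.equiv eI, ?_⟩
  rw [← eI.finrank_eq, ← eJ.finrank_eq]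
  exact hle.trans hrank

end MvPolynomial

theorem finrank_quotient_le_finrank_top_components_general {k : Type*} [Field k] (n : ℕ)
    (𝓕 : Finset (MvPolynomial (Fin n) k)) (d : ℕ)
    (htop : FiniteDimensional k
      (MvPolynomial (Fin n) k ⧸
        Ideal.span ((fun f : MvPolynomial (Fin n) k =>
          MvPolynomial.homogeneousComponent f.totalDegree f) '' (𝓕 : Set (MvPolynomial (Fin n) k)))))
    (hd : Module.finrank k
      (MvPolynomial (Fin n) k ⧸
        Ideal.span ((fun f : MvPolynomial (Fin n) k =>
          MvPolynomial.homogeneousComponent f.totalDegree f) '' (𝓕 : Set (MvPolynomial (Fin n) k)))) = d) :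
    FiniteDimensional k
      (MvPolynomial (Fin n) k ⧸ Ideal.span (𝓕 : Set (MvPolynomial (Fin n) k))) ∧
    Module.finrank k
      (MvPolynomial (Fin n) k ⧸ Ideal.span (𝓕 : Set (MvPolynomial (Fin n) k))) ≤ d := by
  have : FiniteDimensional k
      (_ ⧸ Ideal.span (topHomogeneousComponent '' (𝓕 : Set (MvPolynomial (Fin n) k)))) := htop
  obtain ⟨hfin, hle⟩ :=
    finiteDimensional_quotient_span_and_finrank_le (𝓕 : Set (MvPolynomial (Fin n) k))
  exact ⟨hfin, hd ▸ hle⟩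

/-- If the quotient by the ideal generated by the highest-degree homogeneous
components of a finite set `𝓕` of nonzero polynomials is finite-dimensional of dimension
`d`, then the quotient by the ideal generated by `𝓕` is finite-dimensional of dimension
at most `d`. -/
theorem finrank_quotient_le_finrank_top_components {k : Type*} [Field k] (n : ℕ)
    (𝓕 : Finset (MvPolynomial (Fin n) k)) (h0 : ∀ f ∈ 𝓕, f ≠ 0) (d : ℕ)
    (htop : FiniteDimensional k
      (MvPolynomial (Fin n) k ⧸
        Ideal.span ((fun f : MvPolynomial (Fin n) k =>
          MvPolynomial.homogeneousComponent f.totalDegree f) '' (𝓕 : Set (MvPolynomial (Fin n) k)))))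
    (hd : Module.finrank k
      (MvPolynomial (Fin n) k ⧸
        Ideal.span ((fun f : MvPolynomial (Fin n) k =>
          MvPolynomial.homogeneousComponent f.totalDegree f) '' (𝓕 : Set (MvPolynomial (Fin n) k)))) = d) :
    FiniteDimensional k
      (MvPolynomial (Fin n) k ⧸ Ideal.span (𝓕 : Set (MvPolynomial (Fin n) k))) ∧
    Module.finrank k
      (MvPolynomial (Fin n) k ⧸ Ideal.span (𝓕 : Set (MvPolynomial (Fin n) k))) ≤ d :=
  finrank_quotient_le_finrank_top_components_general n 𝓕 d htop hd
end

section
/- Let 𝔽_q be a finite field, let f ∈ 𝔽_q[X] be a polynomial of degree d ≥ 1, let c ∈ 𝔽_q with c ≠ 0 and c² ≠ 1, let a ∈ 𝔽_q with a ≠ 0, and let b ∈ 𝔽_q. Then the c-Boomerang Connectivity Table entry satisfies ₍c₎B_f(a,b) ≤ d², where f is identified with its evaluation map 𝔽_q → 𝔽_q. -/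
/-!
Writing `u = x` and `v = x + y`, the entry counts the common zeros `(u, v)` of
`P = c f(U) - f(V) + b` and `Q = f(U + a) - c f(V + a) + c b`. Let `H(V) = Res_U(P, Q)`. If
`P(·, v)` and `Q(·, v)` have `k` common roots, their Sylvester matrix has rank at most `2d - k`,
so `(V - v)^k` divides `H`; hence the count is at most `deg H`. Substituting `U = V W` multiplies
`H` by `V^(d²)` and makes every coefficient of degree at most `d` in `V`, with top-degree part
`Res(c L W^d - L, L W^d - c L)` (`L` the leading coefficient of `f`). This is nonzero because
the two polynomials differ, after scaling by `c`, by the unit `(c² - 1) L`, so `deg H = d²`.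
-/

/-- The `c`-Boomerang Connectivity Table entry of a function `F : 𝔽 → 𝔽` at `(a, b)`. -/
noncomputable def cBCT {𝔽 : Type*} [Field 𝔽] (F : 𝔽 → 𝔽) (c a b : 𝔽) : ℕ :=
  Set.ncard {p : 𝔽 × 𝔽 |
    F (p.1 + p.2) - c * F p.1 = b ∧ c * F (p.1 + p.2 + a) - F (p.1 + a) = c * b}

open Polynomial

namespace Matrix

variable {n R : Type*} [Fintype n] [DecidableEq n] [CommRing R]

theorem pow_card_dvd_det_of_dvd_rows (M : Matrix n n R) (s : Finset n) (r : R)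
    (h : ∀ i ∈ s, ∀ j, r ∣ M i j) : r ^ s.card ∣ M.det := by
  choose! N hN using h
  have hM : M = diagonal (fun i => if i ∈ s then r else 1) *
      of (fun i j => if i ∈ s then N i j else M i j) := by
    ext i j
    by_cases hi : i ∈ s
    · simp [diagonal_mul, hi, hN i hi j]
    · simp [diagonal_mul, hi]
  rw [hM, det_mul, det_diagonal, Finset.prod_ite_mem, Finset.univ_inter, Finset.prod_const]
  exact dvd_mul_right _ _

theorem natDegree_det_le_of_natDegree_le (M : Matrix n n R[X]) {e : ℕ}
    (h : ∀ i j, (M i j).natDegree ≤ e) : M.det.natDegree ≤ Fintype.card n * e := by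
  rw [det_apply]
  refine natDegree_sum_le_of_forall_le _ _ fun σ _ => (natDegree_smul_le _ _).trans ?_
  refine (natDegree_prod_le _ _).trans ?_
  exact (Finset.sum_le_card_nsmul _ _ e fun i _ => h (σ i) i).trans_eq
    (by rw [smul_eq_mul, Finset.card_univ])

theorem coeff_det_of_natDegree_le (M : Matrix n n R[X]) {e : ℕ}
    (h : ∀ i j, (M i j).natDegree ≤ e) :
    M.det.coeff (Fintype.card n * e) = (M.map fun p => p.coeff e).det := by
  simp only [det_apply, finsetSum_coeff, coeff_smul, map_apply]
  refine Finset.sum_congr rfl fun σ _ => ?_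
  rw [← Finset.card_univ, coeff_prod_of_natDegree_le _ _ e fun i _ => h (σ i) i]

theorem X_sub_C_pow_dvd_det_of_rank_add_le {K : Type*} [Field K] (M : Matrix n n K[X]) (x : K)
    {k : ℕ} (hk : (M.map (eval x)).rank + k ≤ Fintype.card n) : (X - C x) ^ k ∣ M.det := by
  classical
  -- Transvections `A`, `B` over `K` diagonalise `M(x)` and leave `det M` unchanged; each zero
  -- diagonal entry then gives a row of `A M B` that vanishes at `x`.
  obtain ⟨L, L', D, hD⟩ :=
    Pivot.exists_list_transvec_mul_mul_list_transvec_eq_diagonal (M.map (eval x))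
  set A := (L.map TransvectionStruct.toMatrix).prod
  set B := (L'.map TransvectionStruct.toMatrix).prod
  have hA : A.det = 1 := TransvectionStruct.det_toMatrix_prod L
  have hB : B.det = 1 := TransvectionStruct.det_toMatrix_prod L'
  set M' := (C : K →+* K[X]).mapMatrix A * M * (C : K →+* K[X]).mapMatrix B
  have hdet : M'.det = M.det := by
    simp only [M', det_mul, ← RingHom.map_det, hA, hB, map_one, one_mul, mul_one]
  have heval : (evalRingHom x).mapMatrix M' = diagonal D := by
    rw [← hD]
    simp only [M', map_mul, RingHom.mapMatrix_apply, Matrix.map_map]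
    congr 2 <;> ext <;> simp
  have hrank : (M.map (eval x)).rank = (diagonal D).rank := by
    rw [← hD, rank_mul_eq_left_of_isUnit_det _ _ (by simp [hB]),
      rank_mul_eq_right_of_isUnit_det _ _ (by simp [hA])]
  have hcard : k ≤ (Finset.univ.filter fun i => D i = 0).card := by
    have := Finset.card_filter_add_card_filter_not (s := Finset.univ) (fun i => D i = 0)
    rw [hrank, rank_diagonal, Fintype.card_subtype] at hk
    simp only [ne_eq] at hk
    simp only [Finset.card_univ] at this
    omega
  refine (pow_dvd_pow _ hcard).trans (hdet ▸ pow_card_dvd_det_of_dvd_rows _ _ _ ?_)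
  intro i hi j
  have hij : eval x (M' i j) = diagonal D i j := congrFun (congrFun heval i) j
  rw [dvd_iff_isRoot, IsRoot.def, hij, diagonal_apply]
  split_ifs with hij
  · exact hij ▸ (Finset.mem_filter.1 hi).2
  · rfl

end Matrix

namespace Polynomial

theorem rank_sylvester_le_of_dvd {K : Type*} [Field K] {p q r : K[X]} {m n : ℕ}
    (hp : p.natDegree ≤ m) (hq : q.natDegree ≤ n) (hr : r ≠ 0) (hrp : r ∣ p)
    (hrq : r ∣ q) :
    (sylvester p q m n).rank ≤ m + n - r.natDegree := by
  obtain ⟨p₁, rfl⟩ := hrp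
  obtain ⟨q₁, rfl⟩ := hrq
  set F := sylvesterMap _ _ hp hq
  rw [← toMatrix_sylvesterMap' _ _ hp hq, Matrix.rank_eq_finrank_range_toLin _
    (degreeLT.basis K (m + n)) (((degreeLT.basis K m).prod (degreeLT.basis K n)).reindex
      finSumFinEquiv), Matrix.toLin_toMatrix]
  -- every value `p q' + q p'` of the Sylvester map is `r` times a polynomial of smaller degree
  have hle : (LinearMap.range F).map (degreeLT K (m + n)).subtype ≤
      (degreeLT K (m + n - r.natDegree)).map (LinearMap.mulLeft K r) := by
    rintro _ ⟨_, ⟨⟨p', q'⟩, rfl⟩, rfl⟩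
    set h := p₁ * q' + q₁ * p'
    have hF : ((F (p', q') : K[X]) = r * h) := by
      simp only [F, sylvesterMap_apply_coe, h]
      ring
    refine ⟨h, ?_, hF.symm⟩
    by_cases h0 : h = 0
    · simp [h0]
    have hdeg := (F (p', q')).2
    rw [mem_degreeLT, hF, degree_eq_natDegree (mul_ne_zero hr h0), Nat.cast_lt,
      natDegree_mul hr h0] at hdeg
    rw [SetLike.mem_coe, mem_degreeLT, degree_eq_natDegree h0, Nat.cast_lt]
    omega
  calc Module.finrank K (LinearMap.range F)
      = Module.finrank K ((LinearMap.range F).map (degreeLT K (m + n)).subtype) :=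
        (Submodule.equivMapOfInjective _ (Submodule.injective_subtype _) _).finrank_eq
    _ ≤ Module.finrank K (degreeLT K (m + n - r.natDegree)) :=
        (Submodule.finrank_mono hle).trans (Submodule.finrank_map_le _ _)
    _ = m + n - r.natDegree := by
        rw [Module.finrank_eq_card_basis (degreeLT.basis K _), Fintype.card_fin]

theorem X_sub_C_pow_dvd_resultant {K : Type*} [Field K] {P Q : K[X][X]} {m n : ℕ}
    (hP : P.natDegree ≤ m) (hQ : Q.natDegree ≤ n) (x : K) {r : K[X]} (hr : r ≠ 0)
    (hrP : r ∣ P.map (evalRingHom x)) (hrQ : r ∣ Q.map (evalRingHom x))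
    (hrmn : r.natDegree ≤ m + n) : (X - C x) ^ r.natDegree ∣ resultant P Q m n := by
  refine Matrix.X_sub_C_pow_dvd_det_of_rank_add_le _ x ?_
  have := rank_sylvester_le_of_dvd (natDegree_map_le.trans hP) (natDegree_map_le.trans hQ) hr
    hrP hrQ
  rw [sylvester_map_map, RingHom.mapMatrix_apply, coe_evalRingHom] at this
  rw [Fintype.card_fin]
  omega

theorem ncard_common_zeros_le_natDegree_resultant {K : Type*} [Field K] {P Q : K[X][X]}
    {m n : ℕ} (hP : P.natDegree ≤ m) (hQ : Q.natDegree ≤ n)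
    (hP₀ : ∀ x, P.map (evalRingHom x) ≠ 0) (hres : resultant P Q m n ≠ 0) :
    {z : K × K | P.evalEval z.1 z.2 = 0 ∧ Q.evalEval z.1 z.2 = 0}.ncard ≤
      (resultant P Q m n).natDegree := by
  classical
  set H := resultant P Q m n
  let fiber (x : K) : Finset K :=
    (P.map (evalRingHom x)).roots.toFinset.filter fun y => Q.evalEval x y = 0
  have hfiber (x : K) : (fiber x).card ≤ H.roots.count x := by
    have hdvd {R : K[X][X]} (hR : ∀ y ∈ fiber x, R.evalEval x y = 0) :
        ∏ y ∈ fiber x, (X - C y) ∣ R.map (evalRingHom x) :=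
      Finset.prod_dvd_of_coprime ((pairwise_coprime_X_sub_C Function.injective_id).set_pairwise _)
        fun y hy => by rw [dvd_iff_isRoot, IsRoot.def, map_evalRingHom_eval, hR y hy]
    have hPdvd := hdvd fun y hy => by
      simpa [fiber, map_evalRingHom_eval, hP₀ x] using (Finset.mem_filter.1 hy).1
    have := X_sub_C_pow_dvd_resultant hP hQ x (monic_prod_of_monic _ _
      fun y _ => monic_X_sub_C y).ne_zero hPdvd
      (hdvd fun y hy => (Finset.mem_filter.1 hy).2)
      ((natDegree_le_of_dvd hPdvd (hP₀ x)).trans (natDegree_map_le.trans (by omega)))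
    rwa [natDegree_finsetProd_X_sub_C_eq_card, ← le_rootMultiplicity_iff hres,
      ← count_roots] at this
  have hsub : {z : K × K | P.evalEval z.1 z.2 = 0 ∧ Q.evalEval z.1 z.2 = 0} ⊆
      ↑(H.roots.toFinset.biUnion fun x => (fiber x).image (Prod.mk x)) := by
    rintro ⟨x, y⟩ ⟨hPxy, hQxy⟩
    have hy : y ∈ fiber x := by
      simp [fiber, hP₀ x, map_evalRingHom_eval, hPxy, hQxy]
    have hx : 0 < H.roots.count x := (Finset.card_pos.2 ⟨y, hy⟩).trans_le (hfiber x)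
    simp only [Finset.coe_biUnion, Set.mem_iUnion, Finset.coe_image]
    exact ⟨x, Multiset.mem_toFinset.2 (Multiset.count_pos.1 hx), y, hy, rfl⟩
  calc _ ≤ (H.roots.toFinset.biUnion fun x => (fiber x).image (Prod.mk x)).card :=
        (Set.ncard_le_ncard hsub).trans (Set.ncard_coe_finset _).le
    _ ≤ ∑ x ∈ H.roots.toFinset, H.roots.count x :=
        Finset.card_biUnion_le.trans
          (Finset.sum_le_sum fun x _ => Finset.card_image_le.trans (hfiber x))
    _ = Multiset.card H.roots := Multiset.toFinset_sum_count_eq _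
    _ ≤ H.natDegree := card_roots' H

section TopCoefficient

variable {R : Type*} [CommRing R] {P Q : R[X][X]} {m n e : ℕ}

theorem natDegree_sylvester_le (hP : ∀ k, (P.coeff k).natDegree ≤ e)
    (hQ : ∀ k, (Q.coeff k).natDegree ≤ e) (i j : Fin (m + n)) :
    (sylvester P Q m n i j).natDegree ≤ e := by
  induction j using Fin.addCases <;> simp only [sylvester, Matrix.of_apply, Fin.addCases_left,
    Fin.addCases_right] <;> split_ifs <;> simp [hP, hQ]

theorem natDegree_resultant_le_of_natDegree_coeff_le (hP : ∀ k, (P.coeff k).natDegree ≤ e)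
    (hQ : ∀ k, (Q.coeff k).natDegree ≤ e) : (resultant P Q m n).natDegree ≤ (m + n) * e := by
  simpa [resultant] using Matrix.natDegree_det_le_of_natDegree_le _ (natDegree_sylvester_le hP hQ)

theorem coeff_resultant_of_natDegree_coeff_le (hP : ∀ k, (P.coeff k).natDegree ≤ e)
    (hQ : ∀ k, (Q.coeff k).natDegree ≤ e) {p q : R[X]}
    (hp : ∀ k, (P.coeff k).coeff e = p.coeff k) (hq : ∀ k, (Q.coeff k).coeff e = q.coeff k) :
    (resultant P Q m n).coeff ((m + n) * e) = resultant p q m n := by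
  have := Matrix.coeff_det_of_natDegree_le _ (natDegree_sylvester_le (m := m) (n := n) hP hQ)
  rw [Fintype.card_fin] at this
  rw [resultant, this, resultant]
  congr 1
  ext i j
  induction j using Fin.addCases <;> simp only [sylvester, Matrix.map_apply, Matrix.of_apply,
    Fin.addCases_left, Fin.addCases_right] <;> split_ifs <;> simp [hp, hq]

end TopCoefficient

theorem resultant_comp_C_mul_X {A : Type*} [CommRing A] [IsDomain A] (P Q : A[X]) {s : A}
    (hs : s ≠ 0) :
    resultant (P.comp (C s * X)) (Q.comp (C s * X)) P.natDegree Q.natDegree =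
      s ^ (P.natDegree * Q.natDegree) * resultant P Q := by
  have hdeg (p : A[X]) : (p.comp (C s * X)).natDegree = p.natDegree := by
    rw [natDegree_comp, natDegree_C_mul_X s hs, mul_one]
  have hscale (p : A[X]) : (p.comp (C s * X)).scaleRoots s = C (s ^ p.natDegree) * p := by
    ext k
    rw [coeff_scaleRoots, comp_C_mul_X_coeff, hdeg, coeff_C_mul]
    rcases le_or_gt k p.natDegree with hk | hk
    · rw [mul_assoc, ← pow_add, Nat.add_sub_cancel' hk, mul_comm]
    · simp [coeff_eq_zero_of_natDegree_lt hk]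
  have := resultant_scaleRoots (P.comp (C s * X)) (Q.comp (C s * X)) s
  rw [hscale, hscale, hdeg, hdeg, natDegree_C_mul (pow_ne_zero _ hs),
    natDegree_C_mul (pow_ne_zero _ hs), resultant_C_mul_left, resultant_C_mul_right,
    ← mul_assoc, ← pow_mul, ← pow_mul, mul_comm Q.natDegree, ← pow_add] at this
  refine mul_left_cancel₀ (pow_ne_zero (P.natDegree * Q.natDegree) hs) ?_
  rw [← this, ← mul_assoc, ← pow_add]

section SeparatedPoly

variable {R : Type*} [CommRing R]

/-- The two-variable polynomial `g(U) - h(V)`, as a polynomial in `U` over `R[V]`. -/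
noncomputable def separatedPoly (g h : R[X]) : R[X][X] := g.map C - C h

variable (g h : R[X])

theorem evalEval_separatedPoly (x y : R) :
    (separatedPoly g h).evalEval x y = g.eval y - h.eval x := by
  rw [separatedPoly, evalEval_sub, evalEval_map_C, evalEval_C]

theorem map_evalRingHom_separatedPoly (x : R) :
    (separatedPoly g h).map (evalRingHom x) = g - C (h.eval x) := by
  have hC : (evalRingHom x).comp C = RingHom.id R := by ext; simp
  simp [separatedPoly, Polynomial.map_map, hC]

theorem natDegree_separatedPoly : (separatedPoly g h).natDegree = g.natDegree := by
  rw [separatedPoly, natDegree_sub_C, natDegree_map_eq_of_injective C_injective]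

theorem coeff_separatedPoly_comp (k : ℕ) :
    ((separatedPoly g h).comp (C X * X)).coeff k =
      C (g.coeff k) * X ^ k - if k = 0 then h else 0 := by
  rcases eq_or_ne k 0 with rfl | hk <;> simp [separatedPoly, coeff_C, *]

theorem natDegree_coeff_separatedPoly_comp_le {d : ℕ} (hg : g.natDegree ≤ d)
    (hh : h.natDegree ≤ d) (k : ℕ) :
    (((separatedPoly g h).comp (C X * X)).coeff k).natDegree ≤ d := by
  rw [coeff_separatedPoly_comp]
  refine (natDegree_sub_le _ _).trans (max_le ?_ (by split_ifs <;> simp [hh]))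
  rcases le_or_gt k d with hk | hk
  · exact natDegree_C_mul_X_pow_le _ _ |>.trans hk
  · simp [coeff_eq_zero_of_natDegree_lt (hg.trans_lt hk)]

theorem coeff_coeff_separatedPoly_comp (d k : ℕ) :
    (((separatedPoly g h).comp (C X * X)).coeff k).coeff d =
      (C (g.coeff d) * X ^ d - C (h.coeff d)).coeff k := by
  rw [coeff_separatedPoly_comp]
  simp only [coeff_sub, coeff_C_mul, coeff_X_pow, coeff_C]
  split_ifs <;> simp_all

end SeparatedPoly

theorem natDegree_resultant_separatedPoly {A : Type*} [CommRing A] [IsDomain A]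
    {g₁ h₁ g₂ h₂ : A[X]} {d : ℕ} (hg₁ : g₁.natDegree = d) (hg₂ : g₂.natDegree = d)
    (hh₁ : h₁.natDegree ≤ d) (hh₂ : h₂.natDegree ≤ d)
    (htop : resultant (C (g₁.coeff d) * X ^ d - C (h₁.coeff d))
      (C (g₂.coeff d) * X ^ d - C (h₂.coeff d)) d d ≠ 0) :
    (resultant (separatedPoly g₁ h₁) (separatedPoly g₂ h₂) d d).natDegree = d * d := by
  -- `comp (C X * X)` is the substitution `U = V W`
  have hscale :=
    resultant_comp_C_mul_X (separatedPoly g₁ h₁) (separatedPoly g₂ h₂) X_ne_zero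
  simp only [natDegree_separatedPoly, hg₁, hg₂] at hscale
  have hbound₁ := natDegree_coeff_separatedPoly_comp_le g₁ h₁ hg₁.le hh₁
  have hbound₂ := natDegree_coeff_separatedPoly_comp_le g₂ h₂ hg₂.le hh₂
  have hcoeff := coeff_resultant_of_natDegree_coeff_le (m := d) (n := d) hbound₁ hbound₂
    (coeff_coeff_separatedPoly_comp g₁ h₁ d) (coeff_coeff_separatedPoly_comp g₂ h₂ d)
  have hdeg := natDegree_eq_of_le_of_coeff_ne_zero
    (natDegree_resultant_le_of_natDegree_coeff_le hbound₁ hbound₂) (hcoeff ▸ htop)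
  have hH : resultant (separatedPoly g₁ h₁) (separatedPoly g₂ h₂) d d ≠ 0 := fun h0 =>
    htop (by rw [← hcoeff, hscale, h0, mul_zero, coeff_zero])
  rw [hscale, natDegree_mul (pow_ne_zero _ X_ne_zero) hH, natDegree_X_pow] at hdeg
  linarith

end Polynomial

section CBoomerang

variable {K : Type*} [Field K]

/-- `c f(U) - (f(V) - b)`, which vanishes at `(u, v)` exactly when `f(v) - c f(u) = b`. -/
noncomputable def boomerangPolyLeft (f : K[X]) (c b : K) : K[X][X] :=
  separatedPoly (C c * f) (f - C b)

/-- `f(U + a) - c (f(V + a) - b)`, which vanishes at `(u, v)` exactly when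
`c f(v + a) - f(u + a) = c b`. -/
noncomputable def boomerangPolyRight (f : K[X]) (c a b : K) : K[X][X] :=
  separatedPoly (taylor a f) (C c * (taylor a f - C b))

theorem cBCT_eq_ncard_common_zeros (f : K[X]) (c a b : K) :
    cBCT (fun x => f.eval x) c a b =
      {z : K × K | (boomerangPolyLeft f c b).evalEval z.1 z.2 = 0 ∧
        (boomerangPolyRight f c a b).evalEval z.1 z.2 = 0}.ncard := by
  refine Set.ncard_congr (fun p _ => (p.1 + p.2, p.1)) ?_ ?_ ?_
  · rintro ⟨x, y⟩ ⟨h₁, h₂⟩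
    simp only [boomerangPolyLeft, boomerangPolyRight, Set.mem_ofPred_eq, evalEval_separatedPoly,
      eval_mul, eval_sub, eval_C, taylor_eval]
    exact ⟨by linear_combination -h₁, by linear_combination -h₂⟩
  · rintro ⟨x, y⟩ ⟨x', y'⟩ _ _ h
    simp only [Prod.mk.injEq] at h ⊢
    exact ⟨h.2, by linear_combination h.1 - h.2⟩
  · rintro ⟨v, u⟩ ⟨h₁, h₂⟩
    simp only [boomerangPolyLeft, boomerangPolyRight, evalEval_separatedPoly, eval_mul, eval_sub,
      eval_C, taylor_eval] at h₁ h₂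
    refine ⟨(u, v - u), ⟨?_, ?_⟩, by simp⟩
    · simp only [add_sub_cancel]
      linear_combination -h₁
    · simp only [add_sub_cancel]
      linear_combination -h₂

theorem resultant_C_mul_X_pow_sub_C_ne_zero {c L : K} (hc : c ≠ 0) (hc2 : c ^ 2 ≠ 1)
    (hL : L ≠ 0) (d : ℕ) :
    resultant (C (c * L) * X ^ d - C L) (C L * X ^ d - C (c * L)) d d ≠ 0 := by
  have hdeg {α : K} (β : K) (hα : α ≠ 0) : (C α * X ^ d - C β).natDegree = d := by
    rw [natDegree_sub_C, natDegree_C_mul_X_pow d α hα]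
  have hu : C ((c ^ 2 - 1) * L)⁻¹ * C ((c ^ 2 - 1) * L) = 1 := by
    rw [← map_mul, inv_mul_cancel₀ (mul_ne_zero (sub_ne_zero.2 hc2) hL), map_one]
  have hcop : IsCoprime (C (c * L) * X ^ d - C L) (C L * X ^ d - C (c * L)) := by
    -- the first polynomial minus `c` times the second is the constant `(c ^ 2 - 1) * L`
    refine ⟨C ((c ^ 2 - 1) * L)⁻¹, -C (c * ((c ^ 2 - 1) * L)⁻¹), ?_⟩
    simp only [map_mul, map_sub, map_pow, map_one] at hu ⊢
    linear_combination hu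
  simpa only [hdeg _ (mul_ne_zero hc hL), hdeg _ hL] using resultant_ne_zero _ _ hcop

theorem natDegree_resultant_boomerangPoly {f : K[X]} {d : ℕ} (hdeg : f.natDegree = d)
    (hd : 1 ≤ d) {c : K} (hc : c ≠ 0) (hc2 : c ^ 2 ≠ 1) (a b : K) :
    (resultant (boomerangPolyLeft f c b) (boomerangPolyRight f c a b) d d).natDegree = d * d := by
  have hL : f.coeff d ≠ 0 := by
    rw [← hdeg]
    exact leadingCoeff_ne_zero.2 (ne_zero_of_natDegree_gt (hdeg ▸ hd))
  have htaylor : (taylor a f).coeff d = f.coeff d := by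
    rw [← hdeg]
    exact coeff_taylor_natDegree a f
  refine natDegree_resultant_separatedPoly (by rw [natDegree_C_mul hc, hdeg])
    (by rw [natDegree_taylor, hdeg]) (by rw [natDegree_sub_C, hdeg])
    ((natDegree_C_mul_le _ _).trans (by rw [natDegree_sub_C, natDegree_taylor, hdeg])) ?_
  rw [coeff_C_mul, coeff_C_mul, coeff_sub, coeff_sub, coeff_C_of_ne_zero (by omega), sub_zero,
    sub_zero, htaylor]
  exact resultant_C_mul_X_pow_sub_C_ne_zero hc hc2 hL d

end CBoomerang

theorem c_boomerang_bound_general {𝔽 : Type*} [Field 𝔽]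
    (f : Polynomial 𝔽) (d : ℕ) (hdeg : f.natDegree = d) (hd : 1 ≤ d)
    (c : 𝔽) (hc : c ≠ 0) (hc2 : c ^ 2 ≠ 1)
    (a b : 𝔽) :
    cBCT (fun x => f.eval x) c a b ≤ d ^ 2 := by
  have hres := natDegree_resultant_boomerangPoly hdeg hd hc hc2 a b
  have hleft : (boomerangPolyLeft f c b).natDegree = d := by
    rw [boomerangPolyLeft, natDegree_separatedPoly, natDegree_C_mul hc, hdeg]
  have hright : (boomerangPolyRight f c a b).natDegree = d := by
    rw [boomerangPolyRight, natDegree_separatedPoly, natDegree_taylor, hdeg]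
  have hleft_ne_zero (x : 𝔽) : (boomerangPolyLeft f c b).map (evalRingHom x) ≠ 0 := by
    rw [boomerangPolyLeft, map_evalRingHom_separatedPoly]
    exact ne_zero_of_natDegree_gt (by rwa [natDegree_sub_C, natDegree_C_mul hc, hdeg])
  rw [cBCT_eq_ncard_common_zeros, sq, ← hres]
  exact ncard_common_zeros_le_natDegree_resultant hleft.le hright.le hleft_ne_zero
    (ne_zero_of_natDegree_gt (by rw [hres]; exact Nat.mul_pos hd hd))

/-- For a finite field `𝔽_q`, a polynomial `f` of degree `d ≥ 1`, `c ≠ 0` with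
`c² ≠ 1`, `a ≠ 0` and any `b`, the `c`-BCT entry satisfies `₍c₎B_f(a,b) ≤ d²`. -/
theorem c_boomerang_bound {𝔽 : Type*} [Field 𝔽] [Fintype 𝔽]
    (f : Polynomial 𝔽) (d : ℕ) (hdeg : f.natDegree = d) (hd : 1 ≤ d)
    (c : 𝔽) (hc : c ≠ 0) (hc2 : c ^ 2 ≠ 1)
    (a b : 𝔽) (ha : a ≠ 0) :
    cBCT (fun x => f.eval x) c a b ≤ d ^ 2 :=
  c_boomerang_bound_general f d hdeg hd c hc hc2 a b
end

section
/- Let 𝔽_q be a finite field, let n ≥ 1 be an integer, let c ∈ 𝔽_q with c ≠ 0, let α, β ∈ 𝔽_q with α ≠ 0 and β ≠ 0, and suppose there exists s ∈ 𝔽_q with s ≠ 0 and α·s² = β (this holds exactly when α and β are both squares or both non-squares in 𝔽_q). Then for all a, b ∈ 𝔽_q, the c-Boomerang Connectivity Table entries of the Dickson polynomials of the first kind satisfy ₍c₎B_{D_n(·,α)}(a, b) = ₍c₎B_{D_n(·,β)}(s·a, sⁿ·b), where each Dickson polynomial is identified with its evaluation map 𝔽_q → 𝔽_q. -/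
lemma dickson_scale {𝔽 : Type*} [Field 𝔽] (α s : 𝔽) :
    ∀ (n : ℕ) (x : 𝔽), (Polynomial.dickson 1 (α * s ^ 2) n).eval (s * x)
      = s ^ n * (Polynomial.dickson 1 α n).eval x := by
  intro n
  induction n using Nat.strong_induction_on with
  | _ n ih =>
    match n with
    | 0 => intro x; simp [Polynomial.dickson]
    | 1 => intro x; simp [Polynomial.dickson]
    | (m + 2) =>
      intro x
      have h1 := ih (m + 1) (by omega) x
      have h0 := ih m (by omega) x
      simp only [Polynomial.dickson, Polynomial.eval_sub, Polynomial.eval_mul,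
        Polynomial.eval_X, Polynomial.eval_C, h1, h0]
      ring

/-- For Dickson polynomials of the first kind over a finite field, if
`α·s² = β` with `s ≠ 0`, then `₍c₎B_{D_n(·,α)}(a,b) = ₍c₎B_{D_n(·,β)}(s·a, sⁿ·b)`. -/
theorem dickson_cBCT_relation {𝔽 : Type*} [Field 𝔽] [Fintype 𝔽]
    (n : ℕ) (hn : 1 ≤ n) (c : 𝔽) (hc : c ≠ 0)
    (α β s : 𝔽) (hα : α ≠ 0) (hβ : β ≠ 0) (hs : s ≠ 0) (hαβ : α * s ^ 2 = β)
    (a b : 𝔽) :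
    cBCT (fun x => (Polynomial.dickson 1 α n).eval x) c a b =
      cBCT (fun x => (Polynomial.dickson 1 β n).eval x) c (s * a) (s ^ n * b) := by
  subst hαβ
  unfold cBCT
  have hsn : (s : 𝔽) ^ n ≠ 0 := pow_ne_zero _ hs
  have hinj : Function.Injective (fun p : 𝔽 × 𝔽 => (s * p.1, s * p.2)) := by
    intro p q h
    simp only [Prod.mk.injEq] at h
    exact Prod.ext (mul_left_cancel₀ hs h.1) (mul_left_cancel₀ hs h.2)
  rw [← Set.ncard_image_of_injective _ hinj]
  congr 1
  ext p
  constructor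
  · rintro ⟨q, ⟨h1, h2⟩, rfl⟩
    simp only [Set.mem_setOf_eq] at h1 h2 ⊢
    rw [show s * q.1 + s * q.2 = s * (q.1 + q.2) by ring]
    rw [show s * (q.1 + q.2) + s * a = s * (q.1 + q.2 + a) by ring,
      show s * q.1 + s * a = s * (q.1 + a) by ring]
    simp only [dickson_scale]
    constructor
    · linear_combination (s ^ n) * h1
    · linear_combination (s ^ n) * h2
  · rintro ⟨h1, h2⟩
    simp only [Set.mem_setOf_eq] at h1 h2
    refine ⟨(s⁻¹ * p.1, s⁻¹ * p.2), ?_, by simp [mul_inv_cancel_left₀ hs]⟩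
    have dA : (Polynomial.dickson 1 (α * s ^ 2) n).eval (p.1 + p.2)
        = s ^ n * (Polynomial.dickson 1 α n).eval (s⁻¹ * p.1 + s⁻¹ * p.2) := by
      rw [← dickson_scale]; congr 1; field_simp
    have dB : (Polynomial.dickson 1 (α * s ^ 2) n).eval p.1
        = s ^ n * (Polynomial.dickson 1 α n).eval (s⁻¹ * p.1) := by
      rw [← dickson_scale]; congr 1; field_simp
    have dC : (Polynomial.dickson 1 (α * s ^ 2) n).eval (p.1 + p.2 + s * a)
        = s ^ n * (Polynomial.dickson 1 α n).eval (s⁻¹ * p.1 + s⁻¹ * p.2 + a) := by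
      rw [← dickson_scale]; congr 1; field_simp
    have dD : (Polynomial.dickson 1 (α * s ^ 2) n).eval (p.1 + s * a)
        = s ^ n * (Polynomial.dickson 1 α n).eval (s⁻¹ * p.1 + a) := by
      rw [← dickson_scale]; congr 1; field_simp
    rw [dA, dB] at h1
    rw [dC, dD] at h2
    simp only [Set.mem_setOf_eq]
    constructor
    · apply mul_left_cancel₀ hsn; linear_combination h1
    · apply mul_left_cancel₀ hsn; linear_combination h2
end

section
/- Let 𝔽_q be a finite field, let n ≥ 1 be an integer, let c ∈ 𝔽_q with c ≠ 0, and let α, β ∈ 𝔽_q with α ≠ 0 and β ≠ 0 such that there exists s ∈ 𝔽_q with s ≠ 0 and α·s² = β (i.e. α and β are both squares or both non-squares in 𝔽_q). Then the c-Boomerang uniformities of the Dickson polynomials of the first kind agree: β_{D_n(·,α), c} = β_{D_n(·,β), c}, where each Dickson polynomial is identified with its evaluation map 𝔽_q → 𝔽_q. -/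
/-- The `c`-Boomerang uniformity of `F : 𝔽 → 𝔽`: the maximum of the `c`-BCT entries over
all nonzero `a, b`. -/
noncomputable def cBoomerangUniformity {𝔽 : Type*} [Field 𝔽] (F : 𝔽 → 𝔽) (c : 𝔽) : ℕ :=
  sSup {m : ℕ | ∃ a b : 𝔽, a ≠ 0 ∧ b ≠ 0 ∧ m = cBCT F c a b}

/-!
If `β = s² α` then `D_n(s x, β) = sⁿ D_n(x, α)`, so `D_n(·, β)` is obtained from `D_n(·, α)` by
scaling the input by `s⁻¹` and the output by `sⁿ`. Such a scaling transports the solutions of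
the boomerang system at `(a, b)` bijectively to those at `(s⁻¹ a, s⁻ⁿ b)`, a bijection of the
nonzero pairs, so every `c`-BCT entry, and hence the maximum, is preserved.
-/

open Polynomial

theorem Polynomial.eval_mul_dickson_mul_sq {R : Type*} [CommRing R] (k : ℕ) (s a x : R) :
    ∀ n : ℕ, (dickson k (s ^ 2 * a) n).eval (s * x) = s ^ n * (dickson k a n).eval x
  | 0 => by simp [dickson_zero]
  | 1 => by simp [dickson_one]
  | n + 2 => by
    simp only [dickson_add_two, eval_sub, eval_mul, eval_X, eval_C,
      eval_mul_dickson_mul_sq k s a x n, eval_mul_dickson_mul_sq k s a x (n + 1)]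
    ring

section Scaling

variable {𝔽 : Type*} [Field 𝔽] (F : 𝔽 → 𝔽) {u v : 𝔽}

theorem cBCT_mul_comp_mul (hu : u ≠ 0) (hv : v ≠ 0) (c a b : 𝔽) :
    cBCT (fun x => v * F (u * x)) c a b = cBCT F c (u * a) (v⁻¹ * b) := by
  let scale : 𝔽 × 𝔽 ≃ 𝔽 × 𝔽 := (Equiv.mulLeft₀ u hu).prodCongr (Equiv.mulLeft₀ u hu)
  refine (congrArg Set.ncard ?_).trans
    (Set.ncard_preimage_of_injective_subset_range scale.injective (by simp))
  ext ⟨x, y⟩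
  simp only [Set.mem_ofPred_eq, Set.mem_preimage, scale, Equiv.prodCongr_apply, Prod.map,
    Equiv.mulLeft₀_apply, mul_add]
  have hfirst : ∀ A B : 𝔽, v * A - c * (v * B) = v * (A - c * B) := fun _ _ => by ring
  have hsecond : ∀ C D : 𝔽, c * (v * C) - v * D = v * (c * C - D) := fun _ _ => by ring
  rw [hfirst, hsecond, mul_left_comm c v⁻¹ b, eq_inv_mul_iff_mul_eq₀ hv,
    eq_inv_mul_iff_mul_eq₀ hv]

theorem cBoomerangUniformity_mul_comp_mul (hu : u ≠ 0) (hv : v ≠ 0) (c : 𝔽) :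
    cBoomerangUniformity (fun x => v * F (u * x)) c = cBoomerangUniformity F c := by
  unfold cBoomerangUniformity
  congr 1
  ext m
  simp only [Set.mem_ofPred_eq, cBCT_mul_comp_mul F hu hv]
  constructor
  · rintro ⟨a, b, ha, hb, rfl⟩
    exact ⟨u * a, v⁻¹ * b, mul_ne_zero hu ha, mul_ne_zero (inv_ne_zero hv) hb, rfl⟩
  · rintro ⟨a, b, ha, hb, rfl⟩
    refine ⟨u⁻¹ * a, v * b, mul_ne_zero (inv_ne_zero hu) ha, mul_ne_zero hv hb, ?_⟩
    rw [mul_inv_cancel_left₀ hu, inv_mul_cancel_left₀ hv]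

end Scaling

theorem dickson_boomerang_uniformity_eq_general {𝔽 : Type*} [Field 𝔽]
    (n : ℕ) (c : 𝔽)
    (α β : 𝔽)
    (hsq : ∃ s : 𝔽, s ≠ 0 ∧ α * s ^ 2 = β) :
    cBoomerangUniformity (fun x => (Polynomial.dickson 1 α n).eval x) c =
      cBoomerangUniformity (fun x => (Polynomial.dickson 1 β n).eval x) c := by
  obtain ⟨s, hs, rfl⟩ := hsq
  have hscaled : (fun x => (dickson 1 (α * s ^ 2) n).eval x) =
      fun x => s ^ n * (dickson 1 α n).eval (s⁻¹ * x) := by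
    funext x
    rw [mul_comm α, ← eval_mul_dickson_mul_sq, mul_inv_cancel_left₀ hs]
  rw [hscaled]
  exact (cBoomerangUniformity_mul_comp_mul _ (inv_ne_zero hs) (pow_ne_zero n hs) c).symm

/-- For Dickson polynomials of the first kind over a finite field, if
`α·s² = β` with `s ≠ 0` (i.e. `α, β` are both squares or both non-squares), then the
`c`-Boomerang uniformities of `D_n(·,α)` and `D_n(·,β)` agree. -/
theorem dickson_boomerang_uniformity_eq {𝔽 : Type*} [Field 𝔽] [Fintype 𝔽]
    (n : ℕ) (hn : 1 ≤ n) (c : 𝔽) (hc : c ≠ 0)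
    (α β : 𝔽) (hα : α ≠ 0) (hβ : β ≠ 0)
    (hsq : ∃ s : 𝔽, s ≠ 0 ∧ α * s ^ 2 = β) :
    cBoomerangUniformity (fun x => (Polynomial.dickson 1 α n).eval x) c =
      cBoomerangUniformity (fun x => (Polynomial.dickson 1 β n).eval x) c :=
  dickson_boomerang_uniformity_eq_general n c α β hsq
end
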